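/- arXiv:1711.03748 — 7 statements merged into one kernel-verified Lean document; each statement's English description precedes it below -/
import Mathlib

section
/- In the lattice Sub(B) of subalgebras of a Boolean algebra B, every ideal subalgebra (a subalgebra of the form I ∪ I' for an ideal I of B, where I' = {a' : a ∈ I}) is a dual modular element of Sub(B). -/
/-- A (Boolean) subalgebra of a Boolean algebra. -/
def IsSubalg {B : Type*} [BooleanAlgebra B] (S : Set B) : Prop :=
  ⊥ ∈ S ∧ ⊤ ∈ S ∧ (∀ a ∈ S, ∀ b ∈ S, a ⊓ b ∈ S) ∧
    (∀ a ∈ S, ∀ b ∈ S, a ⊔ b ∈ S) ∧ (∀ a ∈ S, aᶜ ∈ S)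

def Subalg (B : Type*) [BooleanAlgebra B] := {S : Set B // IsSubalg S}

variable {B : Type*} [BooleanAlgebra B]

/-- The meet in `Sub(B)`: intersection of subalgebras. -/
def meetS (S T : Subalg B) : Subalg B :=
  ⟨S.1 ∩ T.1, by
    obtain ⟨h1, h2, h3, h4, h5⟩ := S.2
    obtain ⟨g1, g2, g3, g4, g5⟩ := T.2
    exact ⟨⟨h1, g1⟩, ⟨h2, g2⟩,
      fun a ha b hb => ⟨h3 a ha.1 b hb.1, g3 a ha.2 b hb.2⟩,
      fun a ha b hb => ⟨h4 a ha.1 b hb.1, g4 a ha.2 b hb.2⟩,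
      fun a ha => ⟨h5 a ha.1, g5 a ha.2⟩⟩⟩

/-- The join in `Sub(B)`: the subalgebra generated by the union, i.e. the
intersection of all subalgebras containing both. -/
def joinS (S T : Subalg B) : Subalg B :=
  ⟨⋂₀ {U : Set B | IsSubalg U ∧ S.1 ⊆ U ∧ T.1 ⊆ U}, by
    refine ⟨Set.mem_sInter.mpr fun U hU => hU.1.1,
      Set.mem_sInter.mpr fun U hU => hU.1.2.1, ?_, ?_, ?_⟩
    · intro a ha b hb
      exact Set.mem_sInter.mpr fun U hU =>
        hU.1.2.2.1 a (Set.mem_sInter.mp ha U hU) b (Set.mem_sInter.mp hb U hU)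
    · intro a ha b hb
      exact Set.mem_sInter.mpr fun U hU =>
        hU.1.2.2.2.1 a (Set.mem_sInter.mp ha U hU) b (Set.mem_sInter.mp hb U hU)
    · intro a ha
      exact Set.mem_sInter.mpr fun U hU =>
        hU.1.2.2.2.2 a (Set.mem_sInter.mp ha U hU)⟩

/-- `x` is a dual modular element of the lattice `Sub(B)`:
`(x ∨ y) ∧ z = x ∨ (y ∧ z)` whenever `x ≤ z`, and
`(w ∨ x) ∧ y = w ∨ (x ∧ y)` whenever `w ≤ y`. -/
def DualModularS (x : Subalg B) : Prop :=
  (∀ y z : Subalg B, x.1 ⊆ z.1 → meetS (joinS x y) z = joinS x (meetS y z)) ∧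
  (∀ w y : Subalg B, w.1 ⊆ y.1 → meetS (joinS w x) y = joinS w (meetS x y))

/-!
Regard `B` as a Boolean ring with addition `∆`; an order ideal `I` is then a ring ideal. For any
subalgebra `y`, the sumset `y + I` is again a subalgebra, and it contains `I ∪ I'`, so the join of
`x = I ∪ I'` with `y` lies in `y + I`. Thus an element `b` of `(x ∨ y) ∧ z` is `s ∆ i` with `s ∈ y`
and `i ∈ I ⊆ x`. If `x ≤ z`, then `s = b ∆ i ∈ z`, so `b ∈ x ∨ (y ∧ z)`; if `b` lies in
`(w ∨ x) ∧ y` with `w ≤ y` and `s ∈ w`, then `i = b ∆ s ∈ x ∧ y`, so `b ∈ w ∨ (x ∧ y)`.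
The reverse inclusions are the modular inequality, valid in every lattice.
-/

open scoped symmDiff

theorem inf_symmDiff_inf_le {α : Type*} [GeneralizedBooleanAlgebra α] (a b c d : α) :
    (a ⊓ b) ∆ (c ⊓ d) ≤ a ∆ c ⊔ b ∆ d :=
  calc (a ⊓ b) ∆ (c ⊓ d) ≤ (a ⊓ b) ∆ (c ⊓ b) ⊔ (c ⊓ b) ∆ (c ⊓ d) := symmDiff_triangle _ _ _
    _ = a ∆ c ⊓ b ⊔ c ⊓ b ∆ d := by
      rw [inf_symmDiff_distrib_right, inf_symmDiff_distrib_left]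
    _ ≤ a ∆ c ⊔ b ∆ d := sup_le_sup inf_le_left inf_le_right

theorem sup_symmDiff_sup_le (a b c d : B) : (a ⊔ b) ∆ (c ⊔ d) ≤ a ∆ c ⊔ b ∆ d := by
  rw [← compl_symmDiff_compl, compl_sup, compl_sup, ← compl_symmDiff_compl a c,
    ← compl_symmDiff_compl b d]
  exact inf_symmDiff_inf_le _ _ _ _

theorem IsSubalg.symmDiff_mem {S : Set B} (hS : IsSubalg S) {a b : B}
    (ha : a ∈ S) (hb : b ∈ S) : a ∆ b ∈ S := by
  obtain ⟨-, -, hinf, hsup, hcompl⟩ := hS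
  rw [symmDiff, sdiff_eq, sdiff_eq]
  exact hsup _ (hinf a ha _ (hcompl b hb)) _ (hinf b hb _ (hcompl a ha))

section joinS

variable {S T U : Subalg B}

theorem subset_joinS_left : S.1 ⊆ (joinS S T).1 :=
  fun _ ha => Set.mem_sInter.mpr fun _ hU => hU.2.1 ha

theorem subset_joinS_right : T.1 ⊆ (joinS S T).1 :=
  fun _ ha => Set.mem_sInter.mpr fun _ hU => hU.2.2 ha

theorem joinS_subset (hS : S.1 ⊆ U.1) (hT : T.1 ⊆ U.1) : (joinS S T).1 ⊆ U.1 :=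
  fun _ ha => Set.mem_sInter.mp ha U.1 ⟨U.2, hS, hT⟩

theorem joinS_comm (S T : Subalg B) : joinS S T = joinS T S :=
  Subtype.ext <| congrArg Set.sInter <| Set.ext fun _ => and_congr_right' and_comm

theorem symmDiff_mem_joinS {a b : B} (ha : a ∈ S.1) (hb : b ∈ T.1) :
    a ∆ b ∈ (joinS S T).1 :=
  (joinS S T).2.symmDiff_mem (subset_joinS_left ha) (subset_joinS_right hb)

theorem joinS_meetS_subset {W X Y : Subalg B} (hWY : W.1 ⊆ Y.1) :
    (joinS W (meetS X Y)).1 ⊆ (meetS (joinS W X) Y).1 := fun _ hb =>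
  ⟨joinS_subset (T := meetS X Y) subset_joinS_left
      (fun _ ha => subset_joinS_right ha.1) hb,
    joinS_subset (T := meetS X Y) hWY (fun _ ha => ha.2) hb⟩

end joinS

/-- In the Boolean ring of `B`, whose addition is `∆`, this is the sumset `S + I`. -/
def addIdeal (S : Set B) (I : Order.Ideal B) : Set B :=
  {b | ∃ s ∈ S, b ∆ s ∈ I}

section addIdeal

variable {S : Set B} (I : Order.Ideal B)

theorem subset_addIdeal : S ⊆ addIdeal S I :=
  fun s hs => ⟨s, hs, by simp⟩

theorem IsSubalg.addIdeal (hS : IsSubalg S) : IsSubalg (addIdeal S I) := by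
  obtain ⟨hbot, htop, hinf, hsup, hcompl⟩ := hS
  refine ⟨subset_addIdeal I hbot, subset_addIdeal I htop, ?_, ?_, ?_⟩
  · rintro a ⟨s, hs, has⟩ b ⟨t, ht, hbt⟩
    exact ⟨s ⊓ t, hinf s hs t ht, I.lower (inf_symmDiff_inf_le a b s t) (I.sup_mem has hbt)⟩
  · rintro a ⟨s, hs, has⟩ b ⟨t, ht, hbt⟩
    exact ⟨s ⊔ t, hsup s hs t ht, I.lower (sup_symmDiff_sup_le a b s t) (I.sup_mem has hbt)⟩
  · rintro a ⟨s, hs, has⟩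
    exact ⟨sᶜ, hcompl s hs, by rwa [compl_symmDiff_compl]⟩

theorem union_compl_image_subset_addIdeal (hbot : ⊥ ∈ S) (htop : ⊤ ∈ S) :
    ↑I ∪ compl '' ↑I ⊆ addIdeal S I := by
  rintro a (ha | ⟨i, hi, rfl⟩)
  · exact ⟨⊥, hbot, by simpa using ha⟩
  · exact ⟨⊤, htop, by simpa using hi⟩

end addIdeal

section idealSubalg

variable {x : Subalg B} {I : Order.Ideal B}

theorem exists_symmDiff_mem_of_mem_joinS (hx : x.1 = ↑I ∪ compl '' ↑I) {y : Subalg B}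
    {b : B} (hb : b ∈ (joinS x y).1) : ∃ s ∈ y.1, b ∆ s ∈ I := by
  have hy := y.2
  refine Set.mem_sInter.mp hb (addIdeal y.1 I) ⟨hy.addIdeal I, ?_, subset_addIdeal I⟩
  exact hx ▸ union_compl_image_subset_addIdeal I hy.1 hy.2.1

theorem meetS_joinS_of_subset_left (hx : x.1 = ↑I ∪ compl '' ↑I) {y z : Subalg B}
    (hxz : x.1 ⊆ z.1) : meetS (joinS x y) z = joinS x (meetS y z) := by
  refine Subtype.ext (Set.Subset.antisymm ?_ (joinS_meetS_subset hxz))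
  rintro b ⟨hb, hbz⟩
  obtain ⟨s, hs, hbs⟩ := exists_symmDiff_mem_of_mem_joinS hx hb
  have hbs_x : b ∆ s ∈ x.1 := hx ▸ Or.inl hbs
  have hsz : s ∈ z.1 := by simpa using z.2.symmDiff_mem hbz (hxz hbs_x)
  simpa using symmDiff_mem_joinS (T := meetS y z) hbs_x ⟨hs, hsz⟩

theorem meetS_joinS_of_subset_right (hx : x.1 = ↑I ∪ compl '' ↑I) {w y : Subalg B}
    (hwy : w.1 ⊆ y.1) : meetS (joinS w x) y = joinS w (meetS x y) := by
  refine Subtype.ext (Set.Subset.antisymm ?_ (joinS_meetS_subset hwy))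
  rintro b ⟨hb, hby⟩
  obtain ⟨s, hs, hbs⟩ := exists_symmDiff_mem_of_mem_joinS hx (joinS_comm w x ▸ hb)
  have hbs_xy : b ∆ s ∈ (meetS x y).1 := ⟨hx ▸ Or.inl hbs, y.2.symmDiff_mem hby (hwy hs)⟩
  simpa [symmDiff_comm b s] using symmDiff_mem_joinS (S := w) hs hbs_xy

end idealSubalg

/-- Every ideal subalgebra `I ∪ I'` of a Boolean algebra `B` is a dual modular
element of `Sub(B)`. -/
theorem stmt1 (x : Subalg B) (I : Order.Ideal B)
    (hx : x.1 = ↑I ∪ (compl '' ↑I)) : DualModularS x :=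
  ⟨fun _ _ => meetS_joinS_of_subset_left hx, fun _ _ => meetS_joinS_of_subset_right hx⟩
end

section
/- For any element a of a Boolean algebra B, the subalgebra y = ↓a ∪ ↑a' and the subalgebra z = ↓a' ∪ ↑a satisfy: y ∧ z = {0, a, a', 1} and y ∨ z = B in the lattice Sub(B) of subalgebras of B. -/
section BooleanAlgebra

variable {B : Type*} [BooleanAlgebra B]

theorem le_or_compl_le_and_le_compl_or_le_iff {a b : B} :
    ((b ≤ a ∨ aᶜ ≤ b) ∧ (b ≤ aᶜ ∨ a ≤ b)) ↔ b = ⊥ ∨ b = a ∨ b = aᶜ ∨ b = ⊤ := by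
  constructor
  · rintro ⟨hba | hcb, hbc | hab⟩
    · exact Or.inl (eq_bot_iff.2 ((le_inf hba hbc).trans inf_compl_eq_bot.le))
    · exact Or.inr (Or.inl (le_antisymm hba hab))
    · exact Or.inr (Or.inr (Or.inl (le_antisymm hbc hcb)))
    · exact Or.inr (Or.inr (Or.inr (eq_top_iff.2 (sup_compl_eq_top.ge.trans (sup_le hab hcb)))))
  · rintro (rfl | rfl | rfl | rfl)
    · exact ⟨Or.inl bot_le, Or.inl bot_le⟩
    · exact ⟨Or.inl le_rfl, Or.inr le_rfl⟩
    · exact ⟨Or.inr le_rfl, Or.inl le_rfl⟩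
    · exact ⟨Or.inr le_top, Or.inr le_top⟩

theorem eq_univ_of_sup_closed_of_Iic_union_Iic_compl_subset {U : Set B} (a : B)
    (hsup : ∀ x ∈ U, ∀ y ∈ U, x ⊔ y ∈ U) (hU : Set.Iic a ∪ Set.Iic aᶜ ⊆ U) :
    U = Set.univ := by
  refine Set.eq_univ_of_forall fun b => ?_
  rw [← sup_inf_inf_compl (x := b) (y := a)]
  exact hsup _ (hU (Or.inl inf_le_right)) _ (hU (Or.inr inf_le_right))

end BooleanAlgebra

/-- For `y = ↓a ∪ ↑a'` and `z = ↓a' ∪ ↑a` we have `y ∧ z = {0, a, a', 1}`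
(meet of subalgebras is intersection) and `y ∨ z = B` (the join, i.e. the
smallest subalgebra containing both, is all of `B`). -/
theorem stmt3 {B : Type*} [BooleanAlgebra B] (a : B) :
    ({b : B | b ≤ a ∨ aᶜ ≤ b} ∩ {b : B | b ≤ aᶜ ∨ a ≤ b} = {⊥, a, aᶜ, ⊤}) ∧
    (⋂₀ {U : Set B | IsSubalg U ∧
        {b : B | b ≤ a ∨ aᶜ ≤ b} ∪ {b : B | b ≤ aᶜ ∨ a ≤ b} ⊆ U} = Set.univ) := by
  refine ⟨Set.ext fun b => le_or_compl_le_and_le_compl_or_le_iff, Set.sInter_eq_univ.2 ?_⟩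
  rintro U ⟨⟨-, -, -, hsup, -⟩, hsub⟩
  exact eq_univ_of_sup_closed_of_Iic_union_Iic_compl_subset a hsup
    (Set.union_subset_union (fun _ => Or.inl) (fun _ => Or.inl) |>.trans hsub)
end

section
/- Let B be a Boolean algebra with more than 4 elements and let a, b ∈ B. If ↓a ∪ ↑a' = ↓b ∪ ↑b' and ↓a' ∪ ↑a = ↓b' ∪ ↑b, then a = b. That is, the map a ↦ (↓a ∪ ↑a', ↓a' ∪ ↑a) from B to pairs of subalgebras is injective. -/
/-!
The two sets `↓a ∪ ↑aᶜ` and `↓aᶜ ∪ ↑a` meet exactly in `{⊥, ⊤, a, aᶜ}`, so the hypotheses give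
`{⊥, ⊤, a, aᶜ} = {⊥, ⊤, b, bᶜ}`, whence `b = a` or `b = aᶜ`. In the second case
`↓a ∪ ↑aᶜ = ↓aᶜ ∪ ↑a`; as every `a ⊔ x` lies in `↑a`, this forces `x ≤ a` or `aᶜ ≤ x` for all `x`,
so both sets are all of `B` and `B = {⊥, ⊤, a, aᶜ}` has at most four elements.
-/

open Set

section BooleanAlgebra

variable {B : Type*} [BooleanAlgebra B] {a b : B}

theorem Iic_union_Ici_compl_inter_Iic_compl_union_Ici (a : B) :
    (Iic a ∪ Ici aᶜ) ∩ (Iic aᶜ ∪ Ici a) = {⊥, ⊤, a, aᶜ} := by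
  ext x
  simp only [mem_inter_iff, mem_union, mem_Iic, mem_Ici, mem_insert_iff, mem_singleton_iff]
  constructor
  · rintro ⟨hxa | hax, hxa' | hax'⟩
    · exact Or.inl (le_bot_iff.mp (inf_compl_eq_bot (a := a) ▸ le_inf hxa hxa'))
    · exact Or.inr (Or.inr (Or.inl (le_antisymm hxa hax')))
    · exact Or.inr (Or.inr (Or.inr (le_antisymm hxa' hax)))
    · exact Or.inr (Or.inl (top_le_iff.mp (sup_compl_eq_top (x := a) ▸ sup_le hax' hax)))
  · rintro (rfl | rfl | rfl | rfl) <;> simp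

theorem Iic_union_Ici_compl_eq_univ (h : Iic a ∪ Ici aᶜ = Iic aᶜ ∪ Ici a) :
    Iic a ∪ Ici aᶜ = univ := by
  refine eq_univ_of_forall fun x => ?_
  have hax : a ⊔ x ∈ Iic a ∪ Ici aᶜ := h ▸ Or.inr le_sup_left
  rcases hax with hle | hle
  · exact Or.inl (le_sup_right.trans hle)
  · exact Or.inr (codisjoint_iff_compl_le_right.mp (codisjoint_iff.mpr (top_le_iff.mp
      (sup_compl_eq_top (x := a) ▸ sup_le le_sup_left hle))))

theorem univ_eq_of_Iic_union_Ici_compl_eq (h : Iic a ∪ Ici aᶜ = Iic aᶜ ∪ Ici a) :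
    (univ : Set B) = {⊥, ⊤, a, aᶜ} := by
  rw [← Iic_union_Ici_compl_inter_Iic_compl_union_Ici, ← h, Iic_union_Ici_compl_eq_univ h,
    inter_univ]

theorem eq_or_eq_compl_of_insert_eq (h : ({⊥, ⊤, a, aᶜ} : Set B) = {⊥, ⊤, b, bᶜ}) :
    b = a ∨ b = aᶜ := by
  have hb : b ∈ ({⊥, ⊤, a, aᶜ} : Set B) := h ▸ by simp
  have ha : a ∈ ({⊥, ⊤, b, bᶜ} : Set B) := h ▸ by simp
  rcases hb with rfl | rfl | hba | hba
  · rcases ha with rfl | rfl | rfl | rfl <;> simp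
  · rcases ha with rfl | rfl | rfl | rfl <;> simp
  · exact Or.inl hba
  · exact Or.inr hba

end BooleanAlgebra

theorem exists_injective_fin_four_of_univ_eq {α : Type*} {p q r s : α}
    (h : (univ : Set α) = {p, q, r, s}) : ∃ f : α → Fin 4, Function.Injective f := by
  have hsurj : Function.Surjective ![p, q, r, s] := fun x => by
    rcases h ▸ mem_univ x with rfl | rfl | rfl | rfl
    exacts [⟨0, rfl⟩, ⟨1, rfl⟩, ⟨2, rfl⟩, ⟨3, rfl⟩]
  exact ⟨Function.surjInv hsurj, Function.injective_surjInv hsurj⟩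

/-- Let `B` be a Boolean algebra with more than 4 elements (no injection into
`Fin 4`).  If `↓a ∪ ↑a' = ↓b ∪ ↑b'` and `↓a' ∪ ↑a = ↓b' ∪ ↑b`, then `a = b`;
that is, `a ↦ (↓a ∪ ↑a', ↓a' ∪ ↑a)` is injective. -/
theorem stmt4 {B : Type*} [BooleanAlgebra B]
    (hB : ¬ ∃ f : B → Fin 4, Function.Injective f) (a b : B)
    (h1 : {x : B | x ≤ a ∨ aᶜ ≤ x} = {x : B | x ≤ b ∨ bᶜ ≤ x})
    (h2 : {x : B | x ≤ aᶜ ∨ a ≤ x} = {x : B | x ≤ bᶜ ∨ b ≤ x}) :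
    a = b := by
  change Iic a ∪ Ici aᶜ = Iic b ∪ Ici bᶜ at h1
  change Iic aᶜ ∪ Ici a = Iic bᶜ ∪ Ici b at h2
  have hquad := Iic_union_Ici_compl_inter_Iic_compl_union_Ici a
  rw [h1, h2, Iic_union_Ici_compl_inter_Iic_compl_union_Ici b] at hquad
  rcases eq_or_eq_compl_of_insert_eq hquad.symm with rfl | rfl
  · rfl
  · rw [compl_compl] at h1
    exact absurd (exists_injective_fin_four_of_univ_eq (univ_eq_of_Iic_union_Ici_compl_eq h1)) hB
end

section
/- Let B be a Boolean algebra and a, b ∈ B such that ↓a ∪ ↑a' ⊆ ↓b ∪ ↑b', ↓b' ∪ ↑b ⊆ ↓a' ∪ ↑a, and a ≰ b. Then b = a', and neither a nor a' admits an element strictly between it and 0 on its side; in particular, if there exists c with 0 < c < a, a contradiction follows, so if a is not an atom and a ≠ 0 then a ≤ b. -/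
/-!
Testing the first inclusion at `a` and the second at `b`, the hypothesis `a ≰ b` forces
`bᶜ ≤ a` and `b ≤ aᶜ`, hence `b = aᶜ`. The first inclusion then says that every `x ≤ a`
is either disjoint from `a` or above it, i.e. `x = ⊥` or `x = a`.
-/

section

variable {B : Type*} [BooleanAlgebra B] {a b : B}

theorem compl_le_of_downUp_subset (h : {x : B | x ≤ a ∨ aᶜ ≤ x} ⊆ {x : B | x ≤ b ∨ bᶜ ≤ x})
    (hab : ¬ a ≤ b) : bᶜ ≤ a :=
  (h (Or.inl le_rfl)).resolve_left hab

theorem le_compl_of_downUp_subset (h : {x : B | x ≤ bᶜ ∨ b ≤ x} ⊆ {x : B | x ≤ aᶜ ∨ a ≤ x})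
    (hab : ¬ a ≤ b) : b ≤ aᶜ :=
  (h (Or.inr le_rfl)).resolve_right hab

theorem eq_compl_of_downUp_subset
    (h1 : {x : B | x ≤ a ∨ aᶜ ≤ x} ⊆ {x : B | x ≤ b ∨ bᶜ ≤ x})
    (h2 : {x : B | x ≤ bᶜ ∨ b ≤ x} ⊆ {x : B | x ≤ aᶜ ∨ a ≤ x}) (hab : ¬ a ≤ b) : b = aᶜ :=
  le_antisymm (le_compl_of_downUp_subset h2 hab)
    (compl_le_iff_compl_le.mp (compl_le_of_downUp_subset h1 hab))

theorem eq_bot_of_lt_of_forall_le_compl_or_le (h : ∀ x ≤ a, x ≤ aᶜ ∨ a ≤ x) {c : B}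
    (hc : c < a) : c = ⊥ :=
  (h c hc.le).elim (fun hca => (le_compl_iff_disjoint_right.mp hca).eq_bot_of_le hc.le)
    fun hac => absurd hac hc.not_ge

end

/-- Suppose `↓a ∪ ↑a' ⊆ ↓b ∪ ↑b'`, `↓b' ∪ ↑b ⊆ ↓a' ∪ ↑a`, and `a ≰ b` in a
Boolean algebra `B`.  Then `b = a'`, there is no element strictly between `⊥`
and `a`; in particular the existence of `c` with `0 < c < a` yields a
contradiction, so if `a` is not an atom and `a ≠ 0` then `a ≤ b`. -/
theorem stmt6 {B : Type*} [BooleanAlgebra B] (a b : B)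
    (h1 : {x : B | x ≤ a ∨ aᶜ ≤ x} ⊆ {x : B | x ≤ b ∨ bᶜ ≤ x})
    (h2 : {x : B | x ≤ bᶜ ∨ b ≤ x} ⊆ {x : B | x ≤ aᶜ ∨ a ≤ x})
    (hab : ¬ a ≤ b) :
    b = aᶜ ∧ (∀ c : B, ¬ (⊥ < c ∧ c < a)) ∧
      (¬ IsAtom a → a ≠ ⊥ → a ≤ b) := by
  have hb : b = aᶜ := eq_compl_of_downUp_subset h1 h2 hab
  have hsplit : ∀ x ≤ a, x ≤ aᶜ ∨ a ≤ x := fun x hx => by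
    simpa only [hb, compl_compl, Set.mem_ofPred_eq] using h1 (Or.inl hx)
  have hbot : ∀ c < a, c = ⊥ := fun c hc => eq_bot_of_lt_of_forall_le_compl_or_le hsplit hc
  exact ⟨hb, fun c ⟨hc0, hca⟩ => hc0.ne' (hbot c hca), fun hna ha => (hna ⟨ha, hbot⟩).elim⟩
end

section
/- An orthoalgebra A is Boolean (i.e., arises from a Boolean algebra by restricting join to orthogonal pairs) if and only if every finite subset S of A is contained in {⨁E : E ⊆ F} for some jointly orthogonal finite set F ⊆ A. -/
universe u

/-- An orthoalgebra: a set with a partial commutative associative sum `⊕`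
(with domain of definition `Perp`), an orthocomplementation `'`, and constants
`0`, `1` (with `0 = 1'`), such that `a'` is the unique element with
`a ⊕ a' = 1`, and `a ⊕ a` is defined only when `a = 0`.  The operation
`oplus` is a total function whose values are only meaningful on `Perp`. -/
class Orthoalgebra (A : Type u) where
  Perp : A → A → Prop
  oplus : A → A → A
  ocompl : A → A
  zero : A
  one : A
  perp_comm : ∀ {a b : A}, Perp a b → Perp b a
  oplus_comm : ∀ {a b : A}, Perp a b → oplus a b = oplus b a
  perp_assoc : ∀ {a b c : A}, Perp a b → Perp (oplus a b) c →
    Perp b c ∧ Perp a (oplus b c)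
  oplus_assoc : ∀ {a b c : A}, Perp a b → Perp (oplus a b) c →
    oplus (oplus a b) c = oplus a (oplus b c)
  perp_ocompl : ∀ a : A, Perp a (ocompl a)
  oplus_ocompl : ∀ a : A, oplus a (ocompl a) = one
  ocompl_unique : ∀ {a b : A}, Perp a b → oplus a b = one → b = ocompl a
  perp_self : ∀ {a : A}, Perp a a → a = zero
  zero_def : zero = ocompl one

open Orthoalgebra

variable {A : Type u} [Orthoalgebra A]

/-- The iterated orthogonal sum `⨁` of a list of elements. -/
def listOSum : List A → A
  | [] => zero
  | a :: l => oplus (listOSum l) a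

/-- The list is summable: each partial sum `⨁` is defined.  A finite subset is
jointly orthogonal iff some (equivalently, any) enumeration of it is summable. -/
def ListSummable : List A → Prop
  | [] => True
  | a :: l => ListSummable l ∧ Perp (listOSum l) a


/-- An orthoalgebra is Boolean when it is isomorphic to the orthoalgebra
obtained from a Boolean algebra by restricting join to orthogonal pairs. -/
def IsBooleanOA (A : Type u) [Orthoalgebra A] : Prop :=
  ∃ (B : Type u) (_ : BooleanAlgebra B) (f : A → B),
    Function.Bijective f ∧ f zero = ⊥ ∧ f one = ⊤ ∧
    (∀ a : A, f (ocompl a) = (f a)ᶜ) ∧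
    (∀ a b : A, Perp a b ↔ f a ⊓ f b = ⊥) ∧
    (∀ a b : A, Perp a b → f (oplus a b) = f a ⊔ f b)

section Basics

lemma ocompl_ocompl (a : A) : ocompl (ocompl a) = a := by
  have h : Perp (ocompl a) a := perp_comm (perp_ocompl a)
  have := ocompl_unique h (by rw [oplus_comm h, oplus_ocompl])
  exact this.symm

lemma ocompl_inj {a b : A} (h : ocompl a = ocompl b) : a = b := by
  rw [← ocompl_ocompl a, h, ocompl_ocompl]

lemma ocompl_zero : (ocompl zero : A) = one := by
  rw [zero_def, ocompl_ocompl]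

lemma perp_one_zero : Perp (one : A) zero := by
  have := perp_ocompl (one : A); rwa [← zero_def] at this

lemma oplus_one_zero : oplus (one : A) zero = one := by
  have := oplus_ocompl (one : A); rwa [← zero_def] at this

lemma perp_zero (a : A) : Perp a zero := by
  have h1 : Perp (ocompl a) (ocompl (ocompl a)) := perp_ocompl _
  have h2 : Perp (oplus (ocompl a) (ocompl (ocompl a))) zero := by
    rw [oplus_ocompl]; exact perp_one_zero
  have := (perp_assoc h1 h2).1
  rwa [ocompl_ocompl] at this

lemma zero_perp (a : A) : Perp zero a := perp_comm (perp_zero a)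

lemma oplus_zero (a : A) : oplus a zero = a := by
  have h1 : Perp (ocompl a) a := perp_comm (perp_ocompl a)
  have h2 : Perp (oplus (ocompl a) a) zero := by
    rw [oplus_comm h1, oplus_ocompl]; exact perp_one_zero
  have h3 : Perp (ocompl a) (oplus a zero) := (perp_assoc h1 h2).2
  have h4 : oplus (ocompl a) (oplus a zero) = one := by
    rw [← oplus_assoc h1 h2, oplus_comm h1, oplus_ocompl, oplus_one_zero]
  have := ocompl_unique h3 h4
  rw [this, ocompl_ocompl]

lemma zero_oplus (a : A) : oplus zero a = a := by
  rw [oplus_comm (zero_perp a), oplus_zero]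

lemma eq_zero_of_perp_one {a : A} (h : Perp a one) : a = zero := by
  have h1 : Perp (ocompl a) a := perp_comm (perp_ocompl a)
  have h2 : Perp (oplus (ocompl a) a) a := by
    rw [oplus_comm h1, oplus_ocompl]; exact perp_comm h
  exact perp_self (perp_assoc h1 h2).1

lemma perp_assoc' {a b c : A} (hbc : Perp b c) (h : Perp a (oplus b c)) :
    Perp a b ∧ Perp (oplus a b) c := by
  have hcb : Perp c b := perp_comm hbc
  have h2 : Perp (oplus c b) a := by rw [← oplus_comm hbc]; exact perp_comm h
  obtain ⟨hba, hcba⟩ := perp_assoc hcb h2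
  refine ⟨perp_comm hba, ?_⟩
  have := perp_comm hcba
  rwa [oplus_comm hba] at this

lemma oplus_assoc' {a b c : A} (hbc : Perp b c) (h : Perp a (oplus b c)) :
    oplus a (oplus b c) = oplus (oplus a b) c := by
  obtain ⟨hab, habc⟩ := perp_assoc' hbc h
  exact (oplus_assoc hab habc).symm

lemma perp_left_of_perp_oplus {a x y : A} (hxy : Perp x y) (h : Perp a (oplus x y)) :
    Perp a x := (perp_assoc' hxy h).1

lemma perp_right_of_perp_oplus {a x y : A} (hxy : Perp x y) (h : Perp a (oplus x y)) :
    Perp a y := by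
  have h' : Perp a (oplus y x) := by rwa [oplus_comm hxy] at h
  exact (perp_assoc' (perp_comm hxy) h').1

lemma ocompl_oplus {a b : A} (h : Perp a b) :
    ocompl b = oplus a (ocompl (oplus a b)) := by
  have hba : Perp b a := perp_comm h
  have hs : Perp (oplus b a) (ocompl (oplus a b)) := by
    rw [oplus_comm hba]; exact perp_ocompl _
  obtain ⟨h1, h2⟩ := perp_assoc hba hs
  have h3 : oplus b (oplus a (ocompl (oplus a b))) = one := by
    rw [← oplus_assoc hba hs, oplus_comm hba, oplus_ocompl]
  exact (ocompl_unique h2 h3).symm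

lemma oplus_cancel {a b c : A} (hab : Perp a b) (hac : Perp a c)
    (h : oplus a b = oplus a c) : b = c := by
  have e1 := ocompl_oplus hab
  have e2 := ocompl_oplus hac
  rw [h] at e1
  exact ocompl_inj (e1.trans e2.symm)

lemma eq_zero_of_oplus_eq_zero {a b : A} (hab : Perp a b) (h : oplus a b = zero) :
    a = zero ∧ b = zero := by
  have h1 : Perp (oplus a b) one := by rw [h]; exact zero_perp one
  have hb : b = zero := eq_zero_of_perp_one (perp_assoc hab h1).1
  have ha : a = zero := by
    calc a = oplus a b := by rw [hb, oplus_zero]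
    _ = zero := h
  exact ⟨ha, hb⟩

/-- The natural order on an orthoalgebra. -/
def ole (a b : A) : Prop := Perp a (ocompl b)

lemma ole_iff {a b : A} : ole a b ↔ ∃ c, Perp a c ∧ oplus a c = b := by
  constructor
  · intro h
    have h2 : Perp (oplus a (ocompl b)) (ocompl (oplus a (ocompl b))) := perp_ocompl _
    obtain ⟨hbc, habc⟩ := perp_assoc h h2
    have habc' : Perp a (oplus (ocompl (oplus a (ocompl b))) (ocompl b)) := by
      rwa [oplus_comm hbc] at habc
    obtain ⟨hac, hacb⟩ := perp_assoc' (perp_comm hbc) habc'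
    refine ⟨ocompl (oplus a (ocompl b)), hac, ?_⟩
    have h4 : oplus (oplus a (ocompl (oplus a (ocompl b)))) (ocompl b) = one := by
      rw [← oplus_assoc' (perp_comm hbc) habc', oplus_comm (perp_comm hbc),
        ← oplus_assoc h h2, oplus_ocompl]
    have := ocompl_unique hacb h4
    exact (ocompl_inj this).symm
  · rintro ⟨c, hac, rfl⟩
    have hs : Perp (oplus a c) (ocompl (oplus a c)) := perp_ocompl _
    have h2 : Perp a (oplus c (ocompl (oplus a c))) := (perp_assoc hac hs).2
    exact perp_right_of_perp_oplus (perp_assoc hac hs).1 h2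

lemma ole_refl (a : A) : ole a a := perp_ocompl a

lemma ole_trans {a b c : A} (h1 : ole a b) (h2 : ole b c) : ole a c := by
  obtain ⟨x, hax, rfl⟩ := ole_iff.1 h1
  obtain ⟨y, hby, rfl⟩ := ole_iff.1 h2
  exact ole_iff.2 ⟨oplus x y, (perp_assoc hax hby).2, (oplus_assoc hax hby).symm⟩

lemma ole_antisymm {a b : A} (h1 : ole a b) (h2 : ole b a) : a = b := by
  obtain ⟨x, hax, hb⟩ := ole_iff.1 h1
  obtain ⟨y, hby, ha⟩ := ole_iff.1 h2
  subst hb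
  have hxy : Perp x y := (perp_assoc hax hby).1
  have haxy : Perp a (oplus x y) := (perp_assoc hax hby).2
  have : oplus a (oplus x y) = oplus a zero := by
    rw [← oplus_assoc hax hby, ha, oplus_zero]
  have hxy0 : oplus x y = zero := oplus_cancel haxy (perp_zero a) this
  have hx0 : x = zero := (eq_zero_of_oplus_eq_zero hxy hxy0).1
  rw [hx0, oplus_zero]

lemma zero_ole (a : A) : ole zero a := zero_perp _

lemma ole_one (a : A) : ole a one := by
  have : Perp a zero := perp_zero a
  rwa [zero_def] at this

lemma ole_ocompl {a b : A} (h : ole a b) : ole (ocompl b) (ocompl a) := by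
  unfold ole at *
  rw [ocompl_ocompl]
  exact perp_comm h

lemma ole_oplus_left {a b : A} (h : Perp a b) : ole a (oplus a b) :=
  ole_iff.2 ⟨b, h, rfl⟩

lemma ole_oplus_right {a b : A} (h : Perp a b) : ole b (oplus a b) :=
  ole_iff.2 ⟨a, perp_comm h, oplus_comm (perp_comm h)⟩

lemma perp_of_ole {a b c : A} (h : ole c a) (hab : Perp a b) : Perp c b := by
  obtain ⟨w, hcw, rfl⟩ := ole_iff.1 h
  have := (perp_assoc hcw hab).2
  exact perp_right_of_perp_oplus (perp_assoc hcw hab).1 this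

lemma ole_of_perp {a b : A} (h : Perp a b) : ole a (ocompl b) := by
  unfold ole; rwa [ocompl_ocompl]

end Basics

section Lists

lemma listOSum_nil : listOSum ([] : List A) = zero := rfl

lemma listOSum_cons (a : A) (l : List A) :
    listOSum (a :: l) = oplus (listOSum l) a := rfl

lemma listSummable_cons {a : A} {l : List A} :
    ListSummable (a :: l) ↔ ListSummable l ∧ Perp (listOSum l) a := Iff.rfl

lemma perm_summable {l l' : List A} (h : l.Perm l') :
    ListSummable l → ListSummable l' ∧ listOSum l' = listOSum l := by
  induction h with
  | nil => exact fun _ => ⟨trivial, rfl⟩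
  | cons a p ih =>
    rintro ⟨hS, hP⟩
    obtain ⟨hS', hE⟩ := ih hS
    exact ⟨⟨hS', by rwa [hE]⟩, by rw [listOSum_cons, listOSum_cons, hE]⟩
  | swap x y l =>
    rintro ⟨⟨hS, hPx⟩, hPy⟩
    rw [listOSum_cons] at hPy
    have hxy : Perp x y := (perp_assoc hPx hPy).1
    have h2 : Perp (listOSum l) (oplus y x) := by
      rw [oplus_comm (perp_comm hxy)]; exact (perp_assoc hPx hPy).2
    obtain ⟨hPy', hPx'⟩ := perp_assoc' (perp_comm hxy) h2
    refine ⟨⟨⟨hS, hPy'⟩, by rw [listOSum_cons]; exact hPx'⟩, ?_⟩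
    simp only [listOSum_cons]
    rw [oplus_assoc hPy' hPx', oplus_comm (perp_comm hxy), ← oplus_assoc hPx hPy]
  | trans p q ih ih' =>
    intro hS
    obtain ⟨h1, e1⟩ := ih hS
    obtain ⟨h2, e2⟩ := ih' h1
    exact ⟨h2, e2.trans e1⟩

lemma perm_summable_iff {l l' : List A} (h : l.Perm l') :
    ListSummable l ↔ ListSummable l' :=
  ⟨fun hs => (perm_summable h hs).1, fun hs => (perm_summable h.symm hs).1⟩

lemma perm_listOSum {l l' : List A} (h : l.Perm l') (hs : ListSummable l) :
    listOSum l' = listOSum l := (perm_summable h hs).2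

lemma append_lemma (l1 l2 : List A) :
    (ListSummable (l1 ++ l2) ↔
      ListSummable l1 ∧ ListSummable l2 ∧ Perp (listOSum l2) (listOSum l1)) ∧
    (ListSummable (l1 ++ l2) →
      listOSum (l1 ++ l2) = oplus (listOSum l2) (listOSum l1)) := by
  induction l1 with
  | nil =>
    constructor
    · simp only [List.nil_append, listOSum_nil]
      exact ⟨fun h => ⟨trivial, h, perp_zero _⟩, fun h => h.2.1⟩
    · intro _; simp only [List.nil_append, listOSum_nil]
      exact (oplus_zero _).symm
  | cons a t ih =>
    constructor
    · rw [List.cons_append, listSummable_cons]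
      constructor
      · rintro ⟨hS, hP⟩
        obtain ⟨h1, h2, h3⟩ := ih.1.1 hS
        rw [ih.2 hS] at hP
        obtain ⟨hta, h5⟩ := perp_assoc h3 hP
        exact ⟨⟨h1, hta⟩, h2, by rw [listOSum_cons]; exact h5⟩
      · rintro ⟨⟨h1, hta⟩, h2, h3⟩
        rw [listOSum_cons] at h3
        obtain ⟨h4, h5⟩ := perp_assoc' hta h3
        have hS : ListSummable (t ++ l2) := ih.1.2 ⟨h1, h2, h4⟩
        exact ⟨hS, by rw [ih.2 hS]; exact h5⟩
    · rw [List.cons_append, listSummable_cons]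
      rintro ⟨hS, hP⟩
      obtain ⟨h1, h2, h3⟩ := ih.1.1 hS
      rw [ih.2 hS] at hP
      rw [listOSum_cons, listOSum_cons, ih.2 hS, oplus_assoc h3 hP]

lemma summable_append_iff {l1 l2 : List A} :
    ListSummable (l1 ++ l2) ↔
      ListSummable l1 ∧ ListSummable l2 ∧ Perp (listOSum l2) (listOSum l1) :=
  (append_lemma l1 l2).1

lemma listOSum_append {l1 l2 : List A} (h : ListSummable (l1 ++ l2)) :
    listOSum (l1 ++ l2) = oplus (listOSum l2) (listOSum l1) :=
  (append_lemma l1 l2).2 h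

omit [Orthoalgebra A] in
lemma sublist_exists_perm_append {l' l : List A} (h : l'.Sublist l) :
    ∃ l'', (l' ++ l'').Perm l := by
  induction h with
  | slnil => exact ⟨[], by simp⟩
  | cons a h ih =>
    obtain ⟨l'', hp⟩ := ih
    exact ⟨a :: l'', (List.perm_middle).trans (hp.cons a)⟩
  | cons_cons a h ih =>
    obtain ⟨l'', hp⟩ := ih
    exact ⟨l'', by simpa using hp.cons a⟩

lemma summable_of_sublist {l' l : List A} (h : l'.Sublist l) (hs : ListSummable l) :
    ListSummable l' := by
  obtain ⟨l'', hp⟩ := sublist_exists_perm_append h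
  exact (summable_append_iff.1 (perm_summable hp.symm hs).1).1

lemma ole_listOSum_of_sublist {l' l : List A} (h : l'.Sublist l) (hs : ListSummable l) :
    ole (listOSum l') (listOSum l) := by
  obtain ⟨l'', hp⟩ := sublist_exists_perm_append h
  have := perm_summable hp.symm hs
  rw [← this.2, listOSum_append this.1]
  exact ole_oplus_right (summable_append_iff.1 this.1).2.2

lemma listOSum_filter_of_zero (p : A → Bool) (l : List A) (hs : ListSummable l)
    (h0 : ∀ x ∈ l, p x = false → x = zero) :
    listOSum (l.filter p) = listOSum l := by
  induction l with
  | nil => rfl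
  | cons a t ih =>
    have ht := ih hs.1 (fun x hx => h0 x (List.mem_cons_of_mem a hx))
    by_cases hpa : p a
    · rw [List.filter_cons_of_pos hpa, listOSum_cons, listOSum_cons, ht]
    · have ha : a = zero := h0 a List.mem_cons_self (Bool.eq_false_iff.2 hpa)
      rw [List.filter_cons_of_neg (by simpa using hpa), listOSum_cons, ht, ha, oplus_zero]

end Lists

section Blocks

/-- A maximal jointly-orthogonal family: nodup, summable, no zeros, summing to one. -/
def IsBlock (l : List A) : Prop :=
  l.Nodup ∧ ListSummable l ∧ (zero : A) ∉ l ∧ listOSum l = one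

/-- `a` lies in the span of the family `l`. -/
def InSpan (l : List A) (a : A) : Prop := ∃ l', l'.Sublist l ∧ listOSum l' = a

lemma summable_append_of_disjoint {l l1 l2 : List A} (hn : l.Nodup)
    (hs : ListSummable l) (h1 : l1.Sublist l) (h2 : l2.Sublist l)
    (hd : l1.Disjoint l2) : ListSummable (l1 ++ l2) := by
  classical
  set u := l.filter (fun x => decide (x ∈ l1) || decide (x ∈ l2)) with hu_def
  have hu : u.Sublist l := l.filter_sublist
  have hperm : u.Perm (l1 ++ l2) := by
    rw [List.perm_ext_iff_of_nodup (hu.nodup hn)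
      (((h1.nodup hn)).append (h2.nodup hn) hd)]
    intro x
    simp only [hu_def, List.mem_filter, List.mem_append, Bool.or_eq_true,
      decide_eq_true_eq]
    constructor
    · exact fun h => h.2
    · rintro (h | h)
      · exact ⟨h1.subset h, Or.inl h⟩
      · exact ⟨h2.subset h, Or.inr h⟩
  exact (perm_summable hperm (summable_of_sublist hu hs)).1

lemma perp_of_disjoint {l l1 l2 : List A} (hn : l.Nodup)
    (hs : ListSummable l) (h1 : l1.Sublist l) (h2 : l2.Sublist l)
    (hd : l1.Disjoint l2) : Perp (listOSum l1) (listOSum l2) :=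
  perp_comm (summable_append_iff.1 (summable_append_of_disjoint hn hs h1 h2 hd)).2.2

lemma disjoint_of_perp {l l1 l2 : List A} (hn : l.Nodup) (hs : ListSummable l)
    (hz : (zero : A) ∉ l) (h1 : l1.Sublist l) (h2 : l2.Sublist l)
    (hp : Perp (listOSum l1) (listOSum l2)) : l1.Disjoint l2 := by
  classical
  intro x hx1 hx2
  have hs1 : ListSummable l1 := summable_of_sublist h1 hs
  have hs2 : ListSummable l2 := summable_of_sublist h2 hs
  obtain ⟨hse1, heq1⟩ := perm_summable (List.perm_cons_erase hx1) hs1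
  obtain ⟨hse2, heq2⟩ := perm_summable (List.perm_cons_erase hx2) hs2
  rw [listOSum_cons] at heq1 heq2
  rw [← heq1, ← heq2] at hp
  have hp1 : Perp (listOSum (l1.erase x)) x := hse1.2
  have hp2 : Perp (listOSum (l2.erase x)) x := hse2.2
  have hxx : Perp x x :=
    perp_right_of_perp_oplus hp2 (perp_assoc hp1 hp).1
  exact hz (perp_self hxx ▸ h1.subset hx1)

omit [Orthoalgebra A] in
lemma perm_of_partition {l l1 l2 : List A} (hn : l.Nodup)
    (h1 : l1.Sublist l) (h2 : l2.Sublist l) (hd : l1.Disjoint l2)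
    (hcov : ∀ x ∈ l, x ∈ l1 ∨ x ∈ l2) : (l1 ++ l2).Perm l := by
  rw [List.perm_ext_iff_of_nodup (((h1.nodup hn)).append (h2.nodup hn) hd) hn]
  intro x
  simp only [List.mem_append]
  constructor
  · rintro (h | h)
    · exact h1.subset h
    · exact h2.subset h
  · exact hcov x

lemma listOSum_compl {l l1 lc : List A} (hb : IsBlock l) (h1 : l1.Sublist l)
    (hc : lc.Sublist l) (hd : l1.Disjoint lc) (hcov : ∀ x ∈ l, x ∈ l1 ∨ x ∈ lc) :
    listOSum lc = ocompl (listOSum l1) := by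
  obtain ⟨hn, hs, _, hone⟩ := hb
  have hperm := perm_of_partition hn h1 hc hd hcov
  have hS12 := (perm_summable hperm.symm hs).1
  have hps := (summable_append_iff.1 hS12).2.2
  have hsum : oplus (listOSum l1) (listOSum lc) = one := by
    rw [← oplus_comm hps, ← listOSum_append hS12, perm_listOSum hperm.symm hs, hone]
  exact ocompl_unique (perp_comm hps) hsum

lemma ole_of_subset {l l1 l2 : List A} (hn : l.Nodup) (hs : ListSummable l)
    (h1 : l1.Sublist l) (h2 : l2.Sublist l) (hsub : ∀ x ∈ l1, x ∈ l2) :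
    ole (listOSum l1) (listOSum l2) := by
  classical
  set d := l2.filter (fun x => !decide (x ∈ l1)) with hd_def
  have hd2 : d.Sublist l2 := l2.filter_sublist
  have hdisj : l1.Disjoint d := by
    intro x hx1 hxd
    rw [hd_def, List.mem_filter] at hxd
    simp only [Bool.not_eq_true', decide_eq_false_iff_not] at hxd
    exact hxd.2 hx1
  have hperm : (l1 ++ d).Perm l2 := by
    rw [List.perm_ext_iff_of_nodup
      (((h1.nodup hn)).append ((hd2.trans h2).nodup hn) hdisj) (h2.nodup hn)]
    intro x
    simp only [List.mem_append, hd_def, List.mem_filter, Bool.not_eq_true',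
      decide_eq_false_iff_not]
    constructor
    · rintro (h | h)
      · exact hsub x h
      · exact h.1
    · intro h
      by_cases hx1 : x ∈ l1
      · exact Or.inl hx1
      · exact Or.inr ⟨h, hx1⟩
  have hS := (perm_summable hperm.symm (summable_of_sublist h2 hs)).1
  have heq : listOSum l2 = oplus (listOSum l1) (listOSum d) := by
    rw [← perm_listOSum hperm.symm (summable_of_sublist h2 hs), listOSum_append hS,
      oplus_comm (summable_append_iff.1 hS).2.2]
  exact ole_iff.2 ⟨listOSum d, perp_comm (summable_append_iff.1 hS).2.2, heq.symm⟩

lemma subset_of_ole {l l1 l2 : List A} (hb : IsBlock l) (h1 : l1.Sublist l)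
    (h2 : l2.Sublist l) (hle : ole (listOSum l1) (listOSum l2)) :
    ∀ x ∈ l1, x ∈ l2 := by
  classical
  obtain ⟨hn, hs, hz, hone⟩ := hb
  set lc := l.filter (fun x => !decide (x ∈ l2)) with hlc_def
  have hc : lc.Sublist l := l.filter_sublist
  have hdisj : l2.Disjoint lc := by
    intro x hx2 hxc
    rw [hlc_def, List.mem_filter] at hxc
    simp only [Bool.not_eq_true', decide_eq_false_iff_not] at hxc
    exact hxc.2 hx2
  have hcov : ∀ x ∈ l, x ∈ l2 ∨ x ∈ lc := by
    intro x hx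
    by_cases hx2 : x ∈ l2
    · exact Or.inl hx2
    · exact Or.inr (by
        rw [hlc_def, List.mem_filter]
        simp only [Bool.not_eq_true', decide_eq_false_iff_not]
        exact ⟨hx, hx2⟩)
  have hcompl : listOSum lc = ocompl (listOSum l2) :=
    listOSum_compl ⟨hn, hs, hz, hone⟩ h2 hc hdisj hcov
  have hperp : Perp (listOSum l1) (listOSum lc) := by rw [hcompl]; exact hle
  have hdisj2 : l1.Disjoint lc := disjoint_of_perp hn hs hz h1 hc hperp
  intro x hx1
  by_contra hx2
  exact hdisj2 hx1 (by
    rw [hlc_def, List.mem_filter]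
    simp only [Bool.not_eq_true', decide_eq_false_iff_not]
    exact ⟨h1.subset hx1, hx2⟩)

lemma mem_iff_of_eq_listOSum {l l1 l2 : List A} (hb : IsBlock l)
    (h1 : l1.Sublist l) (h2 : l2.Sublist l) (heq : listOSum l1 = listOSum l2) :
    ∀ x, x ∈ l1 ↔ x ∈ l2 := by
  intro x
  constructor
  · exact fun hx => subset_of_ole hb h1 h2 (heq ▸ ole_refl _) x hx
  · exact fun hx => subset_of_ole hb h2 h1 (heq ▸ ole_refl _) x hx

end Blocks

section Sup

/-- The covering hypothesis: every finite set lies in the span of a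
jointly orthogonal family. -/
def Covers (A : Type u) [Orthoalgebra A] : Prop :=
  ∀ S : Finset A, ∃ l : List A, l.Nodup ∧ ListSummable l ∧
    ∀ s ∈ S, ∃ l' : List A, l'.Sublist l ∧ ListSummable l' ∧ listOSum l' = s

lemma exists_block (H : Covers A) (S : Finset A) :
    ∃ l, IsBlock l ∧ ∀ s ∈ S, InSpan l s := by
  classical
  obtain ⟨l0, hn0, hs0, hspan0⟩ := H S
  set p : A → Bool := fun x => !decide (x = zero) with hp_def
  set l1 := l0.filter p with hl1_def
  have hsub1 : l1.Sublist l0 := l0.filter_sublist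
  have hn1 : l1.Nodup := hsub1.nodup hn0
  have hs1 : ListSummable l1 := summable_of_sublist hsub1 hs0
  have hz1 : (zero : A) ∉ l1 := by
    rw [hl1_def]
    simp [List.mem_filter, hp_def]
  have hzp : ∀ (m : List A), ∀ x ∈ m, p x = false → x = zero := by
    intro m x _ hx
    simpa [hp_def] using hx
  have hspan1 : ∀ s ∈ S, ∃ l', l'.Sublist l1 ∧ listOSum l' = s := by
    intro s hsS
    obtain ⟨l', hsub, hsl', he⟩ := hspan0 s hsS
    exact ⟨l'.filter p, hsub.filter p,
      by rw [listOSum_filter_of_zero p l' hsl' (hzp l'), he]⟩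
  by_cases h1 : listOSum l1 = one
  · exact ⟨l1, ⟨hn1, hs1, hz1, h1⟩, hspan1⟩
  · set t := ocompl (listOSum l1) with ht_def
    have ht0 : t ≠ zero := by
      intro h
      apply h1
      rw [← ocompl_ocompl (listOSum l1), ← ht_def, h, ocompl_zero]
    have htl : t ∉ l1 := by
      intro hmem
      obtain ⟨l'', hp'⟩ := sublist_exists_perm_append (List.singleton_sublist.2 hmem)
      obtain ⟨hSa, hEa⟩ := perm_summable hp'.symm hs1
      have ht1 : listOSum [t] = t := zero_oplus t
      have hpt : Perp (listOSum l'') t := by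
        have := (summable_append_iff.1 hSa).2.2
        rwa [ht1] at this
      have hsumt : listOSum l1 = oplus (listOSum l'') t := by
        rw [← hEa, listOSum_append hSa, ht1]
      have hP : Perp (listOSum l1) t := perp_ocompl _
      rw [hsumt] at hP
      exact ht0 (perp_self (perp_assoc hpt hP).1)
    refine ⟨t :: l1, ⟨List.nodup_cons.2 ⟨htl, hn1⟩, ⟨hs1, perp_ocompl _⟩, ?_, ?_⟩, ?_⟩
    · simp only [List.mem_cons]
      rintro (h | h)
      · exact ht0 h.symm
      · exact hz1 h
    · rw [listOSum_cons, ht_def, oplus_ocompl]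
    · intro s hsS
      obtain ⟨l', hsub, he⟩ := hspan1 s hsS
      exact ⟨l', hsub.cons t, he⟩

lemma union_sublist {l l1 l2 : List A} (hn : l.Nodup) (hs : ListSummable l)
    (h1 : l1.Sublist l) (h2 : l2.Sublist l) :
    ∃ u d : List A, u.Sublist l ∧ d.Sublist l2 ∧
      (∀ x, x ∈ u ↔ x ∈ l1 ∨ x ∈ l2) ∧ (∀ x, x ∈ d ↔ x ∈ l2 ∧ x ∉ l1) ∧
      Perp (listOSum l1) (listOSum d) ∧
      oplus (listOSum l1) (listOSum d) = listOSum u := by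
  classical
  set u := l.filter (fun x => decide (x ∈ l1) || decide (x ∈ l2)) with hu_def
  set d := l2.filter (fun x => !decide (x ∈ l1)) with hd_def
  have hu : u.Sublist l := l.filter_sublist
  have hd : d.Sublist l2 := l2.filter_sublist
  have hmu : ∀ x, x ∈ u ↔ x ∈ l1 ∨ x ∈ l2 := by
    intro x
    rw [hu_def, List.mem_filter]
    simp only [Bool.or_eq_true, decide_eq_true_eq]
    exact ⟨fun h => h.2,
      fun h => ⟨h.elim (fun hh => h1.subset hh) (fun hh => h2.subset hh), h⟩⟩
  have hmd : ∀ x, x ∈ d ↔ x ∈ l2 ∧ x ∉ l1 := by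
    intro x
    rw [hd_def, List.mem_filter]
    simp only [Bool.not_eq_true', decide_eq_false_iff_not]
  have hdisj : l1.Disjoint d := by
    intro x hx1 hxd
    exact ((hmd x).1 hxd).2 hx1
  have hperm : (l1 ++ d).Perm u := by
    rw [List.perm_ext_iff_of_nodup
      ((h1.nodup hn).append ((hd.trans h2).nodup hn) hdisj) (hu.nodup hn)]
    intro x
    rw [List.mem_append, hmu, hmd]
    constructor
    · rintro (h | h)
      · exact Or.inl h
      · exact Or.inr h.1
    · rintro (h | h)
      · exact Or.inl h
      · by_cases hx1 : x ∈ l1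
        · exact Or.inl hx1
        · exact Or.inr ⟨h, hx1⟩
  have hSu : ListSummable u := summable_of_sublist hu hs
  have hS : ListSummable (l1 ++ d) := (perm_summable hperm.symm hSu).1
  have hperp := (summable_append_iff.1 hS).2.2
  refine ⟨u, d, hu, hd, hmu, hmd, perp_comm hperp, ?_⟩
  rw [← perm_listOSum hperm.symm hSu, listOSum_append hS, oplus_comm hperp]

lemma union_sublist_of_disjoint {l l1 l2 : List A} (hn : l.Nodup)
    (hs : ListSummable l) (h1 : l1.Sublist l) (h2 : l2.Sublist l)
    (hdisj : l1.Disjoint l2) :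
    ∃ u : List A, u.Sublist l ∧ (∀ x, x ∈ u ↔ x ∈ l1 ∨ x ∈ l2) ∧
      listOSum u = oplus (listOSum l1) (listOSum l2) := by
  obtain ⟨u, d, hu, hd, hmu, hmd, hperp, hsum⟩ := union_sublist hn hs h1 h2
  have hperm : d.Perm l2 := by
    rw [List.perm_ext_iff_of_nodup ((hd.trans h2).nodup hn) (h2.nodup hn)]
    intro x
    rw [hmd]
    exact ⟨fun h => h.1, fun h => ⟨h, fun hx1 => hdisj hx1 h⟩⟩
  have hds : listOSum d = listOSum l2 :=
    (perm_listOSum hperm (summable_of_sublist (hd.trans h2) hs)).symm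
  rw [hds] at hsum
  exact ⟨u, hu, hmu, hsum.symm⟩

/-- `c` is a least upper bound of `a`, `b` witnessed by a difference `r ≤ b`. -/
def IsSupOA (a b c : A) : Prop :=
  ole a c ∧ ole b c ∧ ∃ r, ole r b ∧ Perp a r ∧ oplus a r = c

lemma exists_isSup (H : Covers A) (a b : A) : ∃ c, IsSupOA a b c := by
  classical
  obtain ⟨l, hb, hspan⟩ := exists_block H {a, b}
  obtain ⟨la, hla, hea⟩ := hspan a (by simp)
  obtain ⟨lb, hlb, heb⟩ := hspan b (by simp)
  obtain ⟨hn, hs, hz, hone⟩ := hb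
  obtain ⟨u, d, hu, hd, hmu, hmd, hperp, hsum⟩ := union_sublist hn hs hla hlb
  refine ⟨listOSum u, ?_, ?_, listOSum d, ?_, ?_, ?_⟩
  · rw [← hea]
    exact ole_of_subset hn hs hla hu (fun x hx => (hmu x).2 (Or.inl hx))
  · rw [← heb]
    exact ole_of_subset hn hs hlb hu (fun x hx => (hmu x).2 (Or.inr hx))
  · rw [← heb]
    exact ole_of_subset hn hs (hd.trans hlb) hlb (fun x hx => ((hmd x).1 hx).1)
  · rw [← hea]; exact hperp
  · rw [← hea]; exact hsum

lemma isSup_le (H : Covers A) {a b c d : A} (hsup : IsSupOA a b c)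
    (had : ole a d) (hbd : ole b d) : ole c d := by
  classical
  obtain ⟨hac, hbc, r, hrb, har, hc⟩ := hsup
  obtain ⟨l, hblk, hspan⟩ := exists_block H {a, b, c, d, r}
  obtain ⟨la, hla, hea⟩ := hspan a (by simp)
  obtain ⟨lb, hlb, heb⟩ := hspan b (by simp)
  obtain ⟨lc, hlc, hec⟩ := hspan c (by simp)
  obtain ⟨ld, hld, hed⟩ := hspan d (by simp)
  obtain ⟨lr, hlr, her⟩ := hspan r (by simp)
  have hn := hblk.1
  have hs := hblk.2.1
  have hsad : ∀ x ∈ la, x ∈ ld :=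
    subset_of_ole hblk hla hld (by rw [hea, hed]; exact had)
  have hsbd : ∀ x ∈ lb, x ∈ ld :=
    subset_of_ole hblk hlb hld (by rw [heb, hed]; exact hbd)
  have hsrb : ∀ x ∈ lr, x ∈ lb :=
    subset_of_ole hblk hlr hlb (by rw [her, heb]; exact hrb)
  have hdisj : la.Disjoint lr :=
    disjoint_of_perp hn hs hblk.2.2.1 hla hlr (by rw [hea, her]; exact har)
  obtain ⟨u, hu, hmu, hsum⟩ := union_sublist_of_disjoint hn hs hla hlr hdisj
  have hceq : listOSum lc = listOSum u := by
    rw [hec, hsum, hea, her, hc]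
  have hmc := mem_iff_of_eq_listOSum hblk hlc hu hceq
  have hsubcd : ∀ x ∈ lc, x ∈ ld := by
    intro x hx
    rcases (hmu x).1 ((hmc x).1 hx) with h | h
    · exact hsad x h
    · exact hsbd x (hsrb x h)
  have := ole_of_subset hn hs hlc hld hsubcd
  rwa [hec, hed] at this

lemma isSup_unique (H : Covers A) {a b c c' : A} (h1 : IsSupOA a b c)
    (h2 : IsSupOA a b c') : c = c' :=
  ole_antisymm (isSup_le H h1 h2.1 h2.2.1) (isSup_le H h2 h1.1 h1.2.1)

/-- The join of two elements, under the covering hypothesis. -/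
noncomputable def osup (H : Covers A) (a b : A) : A :=
  (exists_isSup H a b).choose

lemma osup_isSup (H : Covers A) (a b : A) : IsSupOA a b (osup H a b) :=
  (exists_isSup H a b).choose_spec

lemma ole_osup_left (H : Covers A) (a b : A) : ole a (osup H a b) :=
  (osup_isSup H a b).1

lemma ole_osup_right (H : Covers A) (a b : A) : ole b (osup H a b) :=
  (osup_isSup H a b).2.1

lemma osup_ole (H : Covers A) {a b d : A} (had : ole a d) (hbd : ole b d) :
    ole (osup H a b) d := isSup_le H (osup_isSup H a b) had hbd

lemma osup_eq_of_isSup (H : Covers A) {a b c : A} (h : IsSupOA a b c) :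
    osup H a b = c := isSup_unique H (osup_isSup H a b) h

/-- The meet, by de Morgan. -/
noncomputable def oinf (H : Covers A) (a b : A) : A :=
  ocompl (osup H (ocompl a) (ocompl b))

lemma oinf_ole_left (H : Covers A) (a b : A) : ole (oinf H a b) a := by
  have := ole_ocompl (ole_osup_left H (ocompl a) (ocompl b))
  rwa [ocompl_ocompl] at this

lemma oinf_ole_right (H : Covers A) (a b : A) : ole (oinf H a b) b := by
  have := ole_ocompl (ole_osup_right H (ocompl a) (ocompl b))
  rwa [ocompl_ocompl] at this

lemma ole_oinf (H : Covers A) {a b d : A} (hda : ole d a) (hdb : ole d b) :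
    ole d (oinf H a b) := by
  have := ole_ocompl (osup_ole H (ole_ocompl hda) (ole_ocompl hdb))
  rwa [ocompl_ocompl] at this

lemma osup_oplus (H : Covers A) {a b : A} (h : Perp a b) :
    osup H a b = oplus a b :=
  osup_eq_of_isSup H ⟨ole_oplus_left h, ole_oplus_right h,
    b, ole_refl b, h, rfl⟩

lemma osup_ocompl_self (H : Covers A) (a : A) : osup H a (ocompl a) = one := by
  rw [osup_oplus H (perp_ocompl a), oplus_ocompl]

lemma oinf_ocompl_self (H : Covers A) (a : A) : oinf H a (ocompl a) = zero := by
  rw [oinf, ocompl_ocompl]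
  have : osup H (ocompl a) a = one :=
    osup_eq_of_isSup H ⟨ole_one _, ole_one _, a, ole_refl a,
      perp_comm (perp_ocompl a), oplus_comm (perp_comm (perp_ocompl a)) ▸ oplus_ocompl a⟩
  rw [this, ← zero_def]

end Sup

section Supports

lemma mem_sup_iff (H : Covers A) {l : List A} (hblk : IsBlock l)
    {la lb lj : List A} (hla : la.Sublist l) (hlb : lb.Sublist l)
    (hlj : lj.Sublist l) (hj : listOSum lj = osup H (listOSum la) (listOSum lb)) :
    ∀ x, x ∈ lj ↔ x ∈ la ∨ x ∈ lb := by
  obtain ⟨hn, hs, hz, hone⟩ := hblk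
  obtain ⟨u, d, hu, hd, hmu, hmd, hperp, hsum⟩ := union_sublist hn hs hla hlb
  have hau : ole (listOSum la) (listOSum u) := hsum ▸ ole_oplus_left hperp
  have hbu : ole (listOSum lb) (listOSum u) :=
    ole_of_subset hn hs hlb hu (fun x hx => (hmu x).2 (Or.inr hx))
  have hju : ole (listOSum lj) (listOSum u) := hj ▸ osup_ole H hau hbu
  have hsubju := subset_of_ole ⟨hn, hs, hz, hone⟩ hlj hu hju
  intro x
  constructor
  · exact fun hx => (hmu x).1 (hsubju x hx)
  · rintro (hx | hx)
    · exact subset_of_ole ⟨hn, hs, hz, hone⟩ hla hlj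
        (hj ▸ ole_osup_left H (listOSum la) (listOSum lb)) x hx
    · exact subset_of_ole ⟨hn, hs, hz, hone⟩ hlb hlj
        (hj ▸ ole_osup_right H (listOSum la) (listOSum lb)) x hx

lemma mem_inf_iff (H : Covers A) {l : List A} (hblk : IsBlock l)
    {la lb lj : List A} (hla : la.Sublist l) (hlb : lb.Sublist l)
    (hlj : lj.Sublist l) (hj : listOSum lj = oinf H (listOSum la) (listOSum lb)) :
    ∀ x, x ∈ lj ↔ x ∈ la ∧ x ∈ lb := by
  classical
  obtain ⟨hn, hs, hz, hone⟩ := hblk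
  set w := l.filter (fun x => decide (x ∈ la) && decide (x ∈ lb)) with hw_def
  have hw : w.Sublist l := l.filter_sublist
  have hmw : ∀ x, x ∈ w ↔ x ∈ l ∧ x ∈ la ∧ x ∈ lb := by
    intro x
    rw [hw_def, List.mem_filter]
    simp
  have hwa : ole (listOSum w) (listOSum la) :=
    ole_of_subset hn hs hw hla (fun x hx => ((hmw x).1 hx).2.1)
  have hwb : ole (listOSum w) (listOSum lb) :=
    ole_of_subset hn hs hw hlb (fun x hx => ((hmw x).1 hx).2.2)
  have hwj : ole (listOSum w) (listOSum lj) := hj ▸ ole_oinf H hwa hwb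
  have hsubwj := subset_of_ole ⟨hn, hs, hz, hone⟩ hw hlj hwj
  intro x
  constructor
  · intro hx
    refine ⟨?_, ?_⟩
    · exact subset_of_ole ⟨hn, hs, hz, hone⟩ hlj hla
        (hj ▸ oinf_ole_left H (listOSum la) (listOSum lb)) x hx
    · exact subset_of_ole ⟨hn, hs, hz, hone⟩ hlj hlb
        (hj ▸ oinf_ole_right H (listOSum la) (listOSum lb)) x hx
  · rintro ⟨hxa, hxb⟩
    exact hsubwj x ((hmw x).2 ⟨hla.subset hxa, hxa, hxb⟩)

lemma inf_osup_le (H : Covers A) (a b c : A) :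
    ole (oinf H a (osup H b c)) (osup H (oinf H a b) (oinf H a c)) := by
  classical
  set s := osup H b c with hs_def
  set i1 := oinf H a b with hi1_def
  set i2 := oinf H a c with hi2_def
  set x0 := oinf H a s with hx0_def
  set t := osup H i1 i2 with ht_def
  obtain ⟨l, hblk, hspan⟩ := exists_block H {a, b, c, s, i1, i2, x0, t}
  obtain ⟨la, hla, hea⟩ := hspan a (by simp)
  obtain ⟨lb, hlb, heb⟩ := hspan b (by simp)
  obtain ⟨lc, hlc, hec⟩ := hspan c (by simp)
  obtain ⟨ls, hls, hes⟩ := hspan s (by simp)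
  obtain ⟨li1, hli1, hei1⟩ := hspan i1 (by simp)
  obtain ⟨li2, hli2, hei2⟩ := hspan i2 (by simp)
  obtain ⟨lx0, hlx0, hex0⟩ := hspan x0 (by simp)
  obtain ⟨lt, hlt, het⟩ := hspan t (by simp)
  have hms := mem_sup_iff H hblk hlb hlc hls (by rw [heb, hec, hes])
  have hmi1 := mem_inf_iff H hblk hla hlb hli1 (by rw [hea, heb, hei1])
  have hmi2 := mem_inf_iff H hblk hla hlc hli2 (by rw [hea, hec, hei2])
  have hmx0 := mem_inf_iff H hblk hla hls hlx0 (by rw [hea, hes, hex0])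
  have hmt := mem_sup_iff H hblk hli1 hli2 hlt (by rw [hei1, hei2, het])
  have hsub : ∀ x ∈ lx0, x ∈ lt := by
    intro x hx
    obtain ⟨hxa, hxs⟩ := (hmx0 x).1 hx
    rcases (hms x).1 hxs with h | h
    · exact (hmt x).2 (Or.inl ((hmi1 x).2 ⟨hxa, h⟩))
    · exact (hmt x).2 (Or.inr ((hmi2 x).2 ⟨hxa, h⟩))
  have := ole_of_subset hblk.1 hblk.2.1 hlx0 hlt hsub
  rwa [hex0, het] at this

end Supports

section BooleanConstruction

noncomputable def covLattice (H : Covers A) : Lattice A where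
  le := ole
  le_refl := ole_refl
  le_trans := fun _ _ _ => ole_trans
  le_antisymm := fun _ _ => ole_antisymm
  sup := osup H
  le_sup_left := ole_osup_left H
  le_sup_right := ole_osup_right H
  sup_le := fun _ _ _ => osup_ole H
  inf := oinf H
  inf_le_left := oinf_ole_left H
  inf_le_right := oinf_ole_right H
  le_inf := fun _ _ _ => ole_oinf H

noncomputable def covBool (H : Covers A) : BooleanAlgebra A :=
  letI L : Lattice A := covLattice H
  letI D : DistribLattice A := DistribLattice.ofInfSupLe (inf_osup_le H)
  letI : HasCompl A := ⟨ocompl⟩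
  letI : Top A := ⟨one⟩
  letI : Bot A := ⟨zero⟩
  letI : SDiff A := ⟨fun x y => oinf H x (ocompl y)⟩
  letI : HImp A := ⟨fun x y => osup H y (ocompl x)⟩
  { compl := ocompl
    inf_compl_le_bot := fun x => by
      show ole (oinf H x (ocompl x)) zero
      rw [oinf_ocompl_self H]
      exact ole_refl _
    top_le_sup_compl := fun x => by
      show ole one (osup H x (ocompl x))
      rw [osup_ocompl_self H]
      exact ole_refl _
    le_top := ole_one
    bot_le := zero_ole
    sdiff_eq := fun x y => rfl
    himp_eq := fun x y => rfl }

end BooleanConstruction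

theorem covers_isBoolean (H : Covers A) : IsBooleanOA A := by
  classical
  refine ⟨A, covBool H, id, Function.bijective_id, rfl, rfl, fun a => rfl,
    fun a b => ?_, fun a b h => ?_⟩
  · show Perp a b ↔ oinf H a b = zero
    constructor
    · intro hperp
      have hia : ole (oinf H a b) a := oinf_ole_left H a b
      have hib : ole (oinf H a b) b := oinf_ole_right H a b
      have h1 : Perp (oinf H a b) b := perp_of_ole hia hperp
      have h2 : Perp (oinf H a b) (oinf H a b) := perp_of_ole hib (perp_comm h1)
      exact perp_self h2
    · intro hinf
      obtain ⟨l, hblk, hspan⟩ := exists_block H {a, b, oinf H a b}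
      obtain ⟨la, hla, hea⟩ := hspan a (by simp)
      obtain ⟨lb, hlb, heb⟩ := hspan b (by simp)
      obtain ⟨li, hli, hei⟩ := hspan (oinf H a b) (by simp)
      have hmi := mem_inf_iff H hblk hla hlb hli (by rw [hea, heb, hei])
      have hnil : ∀ x, x ∈ li ↔ x ∈ ([] : List A) :=
        mem_iff_of_eq_listOSum hblk hli (List.nil_sublist l)
          (by rw [hei, hinf, listOSum_nil])
      have hdisj : la.Disjoint lb := by
        intro x hxa hxb
        simpa using (hnil x).1 ((hmi x).2 ⟨hxa, hxb⟩)
      have := perp_of_disjoint hblk.1 hblk.2.1 hla hlb hdisj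
      rwa [hea, heb] at this
  · show oplus a b = osup H a b
    exact (osup_oplus H h).symm

section Forward

variable {B : Type u} [BooleanAlgebra B]

omit [Orthoalgebra A] in
lemma exists_partition (T : Finset B) :
    ∃ D : Finset B, (∀ x ∈ D, ∀ y ∈ D, x ≠ y → x ⊓ y = ⊥) ∧
      ∀ t ∈ T, ∃ E ⊆ D, E.sup id = t := by
  classical
  induction T using Finset.induction_on with
  | empty => exact ⟨∅, by simp, by simp⟩
  | @insert a T' hnm ih =>
    obtain ⟨D, hD, hcov⟩ := ih
    set r : B := a ⊓ (D.sup id)ᶜ with hr_def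
    set Dnew : Finset B := (D.image (· ⊓ a) ∪ D.image (· ⊓ aᶜ)) ∪ {r} with hDnew_def
    have hgen : ∀ x ∈ Dnew,
        (∃ d ∈ D, x = d ⊓ a) ∨ (∃ d ∈ D, x = d ⊓ aᶜ) ∨ x = r := by
      intro x hx
      simp only [hDnew_def, Finset.mem_union, Finset.mem_image,
        Finset.mem_singleton] at hx
      rcases hx with (⟨d, hd, he⟩ | ⟨d, hd, he⟩) | he
      · exact Or.inl ⟨d, hd, he.symm⟩
      · exact Or.inr (Or.inl ⟨d, hd, he.symm⟩)
      · exact Or.inr (Or.inr he)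
    have key : ∀ x ∈ Dnew, ∀ y ∈ Dnew, x = y ∨ x ⊓ y = ⊥ := by
      intro x hx y hy
      have hsupD : ∀ d ∈ D, d ≤ D.sup id := fun d hd => Finset.le_sup (f := id) hd
      rcases hgen x hx with ⟨d, hd, rfl⟩ | ⟨d, hd, rfl⟩ | rfl <;>
        rcases hgen y hy with ⟨e, he, rfl⟩ | ⟨e, he, rfl⟩ | rfl
      · by_cases hde : d = e
        · exact Or.inl (by rw [hde])
        · refine Or.inr (le_bot_iff.1 ?_)
          calc d ⊓ a ⊓ (e ⊓ a) ≤ d ⊓ e := inf_le_inf inf_le_left inf_le_left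
          _ = ⊥ := hD d hd e he hde
      · by_cases hde : d = e
        · subst hde
          refine Or.inr (le_bot_iff.1 ?_)
          calc d ⊓ a ⊓ (d ⊓ aᶜ) ≤ a ⊓ aᶜ := inf_le_inf inf_le_right inf_le_right
          _ = ⊥ := inf_compl_eq_bot
        · refine Or.inr (le_bot_iff.1 ?_)
          calc d ⊓ a ⊓ (e ⊓ aᶜ) ≤ d ⊓ e := inf_le_inf inf_le_left inf_le_left
          _ = ⊥ := hD d hd e he hde
      · refine Or.inr (le_bot_iff.1 ?_)
        calc d ⊓ a ⊓ (a ⊓ (D.sup id)ᶜ) ≤ D.sup id ⊓ (D.sup id)ᶜ :=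
          inf_le_inf (le_trans inf_le_left (hsupD d hd)) inf_le_right
        _ = ⊥ := inf_compl_eq_bot
      · by_cases hde : d = e
        · subst hde
          refine Or.inr (le_bot_iff.1 ?_)
          calc d ⊓ aᶜ ⊓ (d ⊓ a) ≤ aᶜ ⊓ a := inf_le_inf inf_le_right inf_le_right
          _ = ⊥ := compl_inf_eq_bot
        · refine Or.inr (le_bot_iff.1 ?_)
          calc d ⊓ aᶜ ⊓ (e ⊓ a) ≤ d ⊓ e := inf_le_inf inf_le_left inf_le_left
          _ = ⊥ := hD d hd e he hde
      · by_cases hde : d = e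
        · exact Or.inl (by rw [hde])
        · refine Or.inr (le_bot_iff.1 ?_)
          calc d ⊓ aᶜ ⊓ (e ⊓ aᶜ) ≤ d ⊓ e := inf_le_inf inf_le_left inf_le_left
          _ = ⊥ := hD d hd e he hde
      · refine Or.inr (le_bot_iff.1 ?_)
        calc d ⊓ aᶜ ⊓ (a ⊓ (D.sup id)ᶜ) ≤ aᶜ ⊓ a :=
          inf_le_inf inf_le_right inf_le_left
        _ = ⊥ := compl_inf_eq_bot
      · refine Or.inr (le_bot_iff.1 ?_)
        calc a ⊓ (D.sup id)ᶜ ⊓ (e ⊓ a) ≤ (D.sup id)ᶜ ⊓ D.sup id :=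
          inf_le_inf inf_le_right (le_trans inf_le_left (hsupD e he))
        _ = ⊥ := compl_inf_eq_bot
      · refine Or.inr (le_bot_iff.1 ?_)
        calc a ⊓ (D.sup id)ᶜ ⊓ (e ⊓ aᶜ) ≤ a ⊓ aᶜ :=
          inf_le_inf inf_le_left inf_le_right
        _ = ⊥ := inf_compl_eq_bot
      · exact Or.inl rfl
    refine ⟨Dnew, ?_, ?_⟩
    · intro x hx y hy hxy
      rcases key x hx y hy with h | h
      · exact absurd h hxy
      · exact h
    · intro t ht
      rcases Finset.mem_insert.1 ht with rfl | ht'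
      · refine ⟨D.image (· ⊓ t) ∪ {r}, ?_, ?_⟩
        · rw [hDnew_def]
          exact Finset.union_subset_union Finset.subset_union_left le_rfl
        · rw [Finset.sup_union, Finset.sup_singleton, Finset.sup_image]
          have h1 : D.sup (id ∘ (· ⊓ t)) = D.sup id ⊓ t := by
            rw [Finset.sup_inf_distrib_right]
            rfl
          simp only [id_eq]
          rw [h1, hr_def, inf_comm (D.sup id) t, ← inf_sup_left,
            sup_compl_eq_top, inf_top_eq]
      · obtain ⟨E, hE, hsupE⟩ := hcov t ht'
        refine ⟨E.image (· ⊓ a) ∪ E.image (· ⊓ aᶜ), ?_, ?_⟩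
        · rw [hDnew_def]
          exact le_trans (Finset.union_subset_union
            (Finset.image_subset_image hE) (Finset.image_subset_image hE))
            Finset.subset_union_left
        · rw [Finset.sup_union, Finset.sup_image, Finset.sup_image]
          have h1 : E.sup (id ∘ (· ⊓ a)) = E.sup id ⊓ a := by
            rw [Finset.sup_inf_distrib_right]; rfl
          have h2 : E.sup (id ∘ (· ⊓ aᶜ)) = E.sup id ⊓ aᶜ := by
            rw [Finset.sup_inf_distrib_right]; rfl
          rw [h1, h2, ← inf_sup_left, sup_compl_eq_top, inf_top_eq, hsupE]

omit [Orthoalgebra A] in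
lemma foldr_sup_bot_inf_eq (m : List B) (x : B) (h : ∀ y ∈ m, y ⊓ x = ⊥) :
    m.foldr (· ⊔ ·) ⊥ ⊓ x = ⊥ := by
  induction m with
  | nil => simp
  | cons y t ih =>
    rw [List.foldr_cons, inf_sup_right, h y (by simp),
      ih (fun z hz => h z (List.mem_cons_of_mem y hz)), bot_sup_eq]

omit [Orthoalgebra A] in
lemma foldr_sup_bot_eq_sup [DecidableEq B] (m : List B) :
    m.foldr (· ⊔ ·) ⊥ = m.toFinset.sup id := by
  classical
  induction m with
  | nil => simp
  | cons y t ih => rw [List.foldr_cons, ih, List.toFinset_cons, Finset.sup_insert]; rfl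

lemma pullback_summable (f : A → B) (g : B → A)
    (hfg : ∀ x, f (g x) = x) (hz : f zero = ⊥)
    (hperp : ∀ a b : A, Perp a b ↔ f a ⊓ f b = ⊥)
    (hsum : ∀ a b : A, Perp a b → f (oplus a b) = f a ⊔ f b) :
    ∀ m : List B, m.Nodup → (∀ x ∈ m, ∀ y ∈ m, x ≠ y → x ⊓ y = ⊥) →
      ListSummable (m.map g) ∧ f (listOSum (m.map g)) = m.foldr (· ⊔ ·) ⊥ := by
  intro m
  induction m with
  | nil => exact fun _ _ => ⟨trivial, by rw [List.map_nil, listOSum_nil, hz]; rfl⟩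
  | cons x t ih =>
    intro hnd hpair
    obtain ⟨hS, hE⟩ := ih (List.nodup_cons.1 hnd).2
      (fun y hy z hz => hpair y (List.mem_cons_of_mem x hy) z (List.mem_cons_of_mem x hz))
    have hxt : x ∉ t := (List.nodup_cons.1 hnd).1
    have hd : t.foldr (· ⊔ ·) ⊥ ⊓ x = ⊥ :=
      foldr_sup_bot_inf_eq t x (fun y hy =>
        hpair y (List.mem_cons_of_mem x hy) x (by simp)
          (fun h => hxt (h ▸ hy)))
    have hP : Perp (listOSum (t.map g)) (g x) := by
      rw [hperp, hfg, hE]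
      exact hd
    refine ⟨⟨hS, hP⟩, ?_⟩
    rw [List.map_cons, listOSum_cons, hsum _ _ hP, hfg, hE, List.foldr_cons, sup_comm]

theorem isBoolean_covers (hB : IsBooleanOA A) : Covers A := by
  classical
  obtain ⟨B, inst, f, hbij, hz, ho, hc, hperp, hsum⟩ := hB
  intro S
  obtain ⟨D, hD, hcov⟩ := exists_partition (S.image f)
  set e := Equiv.ofBijective f hbij with he_def
  set g : B → A := fun x => e.symm x with hg_def
  have hfg : ∀ x, f (g x) = x := fun x => e.apply_symm_apply x
  have ginj : Function.Injective g := fun x y hxy => e.symm.injective hxy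
  set m := D.toList with hm_def
  have hm_nodup : m.Nodup := D.nodup_toList
  have hmemD : ∀ x, x ∈ m ↔ x ∈ D := fun x => Finset.mem_toList
  have hpairm : ∀ x ∈ m, ∀ y ∈ m, x ≠ y → x ⊓ y = ⊥ := fun x hx y hy =>
    hD x ((hmemD x).1 hx) y ((hmemD y).1 hy)
  obtain ⟨hSm, hEm⟩ := pullback_summable f g hfg hz hperp hsum m hm_nodup hpairm
  refine ⟨m.map g, hm_nodup.map ginj, hSm, ?_⟩
  intro s hs
  obtain ⟨E, hE, hsupE⟩ := hcov (f s) (Finset.mem_image_of_mem f hs)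
  set m' := m.filter (fun x => decide (x ∈ E)) with hm'_def
  have hm'sub : m'.Sublist m := m.filter_sublist
  have hm'nodup : m'.Nodup := hm'sub.nodup hm_nodup
  have hpairm' : ∀ x ∈ m', ∀ y ∈ m', x ≠ y → x ⊓ y = ⊥ := fun x hx y hy =>
    hpairm x (hm'sub.subset hx) y (hm'sub.subset hy)
  obtain ⟨hSm', hEm'⟩ := pullback_summable f g hfg hz hperp hsum m' hm'nodup hpairm'
  refine ⟨m'.map g, hm'sub.map g, hSm', ?_⟩
  apply hbij.1
  rw [hEm', foldr_sup_bot_eq_sup]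
  have : m'.toFinset = E := by
    ext x
    rw [List.mem_toFinset, hm'_def, List.mem_filter]
    simp only [decide_eq_true_eq]
    exact ⟨fun h => h.2, fun h => ⟨(hmemD x).2 (hE h), h⟩⟩
  rw [this, hsupE]

end Forward

theorem covers_of_rhs
    (H : ∀ S : Finset A, ∃ l : List A, l.Nodup ∧ ListSummable l ∧
      ∀ s ∈ S, ∃ l' : List A, l'.Sublist l ∧ ListSummable l' ∧ listOSum l' = s) :
    Covers A := H

/-- An orthoalgebra `A` is Boolean if and only if every finite subset `S ⊆ A`
is contained in `{⨁E : E ⊆ F}` for some jointly orthogonal finite set `F`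
(presented as a duplicate-free summable list, its subsets as sublists). -/
theorem stmt7 : IsBooleanOA A ↔
    ∀ S : Finset A, ∃ l : List A, l.Nodup ∧ ListSummable l ∧
      ∀ s ∈ S, ∃ l' : List A, l'.Sublist l ∧ ListSummable l' ∧ listOSum l' = s :=
  ⟨fun h => isBoolean_covers h, fun H => covers_isBoolean H⟩
end

section
/- Let A be an orthoalgebra and let x, y be distinct atoms of BSub(A) (i.e., subalgebras {0,a,a',1} and {0,b,b',1} with a,b ∉ {0,1} and {a,a'} ≠ {b,b'}) both covered by an element w of BSub(A). Then w is an 8-element Boolean subalgebra and w is the least upper bound of x and y in BSub(A). -/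
universe u

open Orthoalgebra

variable {A : Type u} [Orthoalgebra A]

/-- A subalgebra of an orthoalgebra: contains `0` and `1`, closed under `'`
and under `⊕` of orthogonal pairs. -/
def IsOASubalg (S : Set A) : Prop :=
  zero ∈ S ∧ one ∈ S ∧ (∀ a ∈ S, ocompl a ∈ S) ∧
    ∀ a ∈ S, ∀ b ∈ S, Perp a b → oplus a b ∈ S

/-- A Boolean subalgebra of an orthoalgebra: a subalgebra which, as an
orthoalgebra in its own right, is Boolean, i.e. is isomorphic to the
orthoalgebra induced by a Boolean algebra. -/
def IsBooleanSubalg (S : Set A) : Prop :=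
  IsOASubalg S ∧
  ∃ (B : Type u) (_ : BooleanAlgebra B) (f : S → B),
    Function.Bijective f ∧
    (∀ z : S, (z : A) = zero → f z = ⊥) ∧
    (∀ o : S, (o : A) = one → f o = ⊤) ∧
    (∀ a c : S, (c : A) = ocompl (a : A) → f c = (f a)ᶜ) ∧
    (∀ a b : S, Perp (a : A) (b : A) ↔ f a ⊓ f b = ⊥) ∧
    (∀ a b c : S, Perp (a : A) (b : A) → (c : A) = oplus (a : A) (b : A) →
      f c = f a ⊔ f b)

/-!
Transport everything along an isomorphism `g : B → W` with a Boolean algebra `B`, and write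
`a = g p`, `b = g q`. The covering hypothesis says that every Boolean subalgebra of `B` containing
`p` is `{⊥, p, pᶜ, ⊤}` or `B`. As `q ∉ {⊥, p, pᶜ, ⊤}`, one of `p ⊓ q`, `pᶜ ⊓ q` (say the first)
lies strictly between `⊥` and `p`. The sups of subfamilies of the partition `p ⊓ q, p \ q, pᶜ` form
a Boolean subalgebra containing `p` and `p ⊓ q`, hence all of `B`, so `B` has `2 ^ 3 = 8` elements.
A subalgebra `U` of `A` containing `a` and `b` pulls back to a subset of `B` closed under
complements and disjoint sups that contains `p` and `q`; in this eight-element algebra such a set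
contains the three atoms, hence everything.
-/

section BooleanAlgebra

open Finset Function

variable {B : Type*} [BooleanAlgebra B]

/-- The subalgebras of `B` regarded as an orthoalgebra, where `x ⊥ y` means `Disjoint x y` and
`x ⊕ y = x ⊔ y`. -/
structure IsOrthoSubalgebra (S : Set B) : Prop where
  bot_mem : ⊥ ∈ S
  compl_mem : ∀ x ∈ S, xᶜ ∈ S
  sup_mem : ∀ x ∈ S, ∀ y ∈ S, Disjoint x y → x ⊔ y ∈ S

lemma IsOrthoSubalgebra.sdiff_mem {S : Set B} (hS : IsOrthoSubalgebra S) {p x : B} (hp : p ∈ S)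
    (hx : x ∈ S) (hxp : x ≤ p) : p \ x ∈ S := by
  have h : p \ x = (x ⊔ pᶜ)ᶜ := by rw [compl_sup, compl_compl, sdiff_eq, inf_comm]
  rw [h]
  exact hS.compl_mem _ (hS.sup_mem _ hx _ (hS.compl_mem _ hp) (disjoint_compl_right.mono_left hxp))

section Partition

variable {ι : Type*} [DecidableEq ι] {e : ι → B}

lemma Finset.sup_inf_of_pairwise_disjoint (he : Pairwise (Disjoint on e)) (s : Finset ι) (i : ι) :
    s.sup e ⊓ e i = if i ∈ s then e i else ⊥ := by
  split_ifs with hi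
  · exact inf_eq_right.2 (le_sup hi)
  · exact (Finset.disjoint_sup_left.2 fun j hj => he (ne_of_mem_of_not_mem hj hi)).eq_bot

lemma Finset.sup_injective_of_pairwise_disjoint (he : Pairwise (Disjoint on e))
    (hne : ∀ i, e i ≠ ⊥) : Injective fun s : Finset ι => s.sup e := by
  intro s t hst
  ext i
  have h := congrArg (· ⊓ e i) hst
  simp only [Finset.sup_inf_of_pairwise_disjoint he] at h
  by_cases hs : i ∈ s <;> by_cases ht : i ∈ t <;> simp only [hs, ht, if_true, if_false] at h ⊢
  exacts [(hne i h).elim, (hne i h.symm).elim]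

lemma Finset.compl_sup_of_pairwise_disjoint [Fintype ι] (he : Pairwise (Disjoint on e))
    (htop : univ.sup e = ⊤) (s : Finset ι) : (s.sup e)ᶜ = sᶜ.sup e := by
  refine IsCompl.compl_eq ⟨?_, ?_⟩
  · exact Finset.disjoint_sup_left.2 fun i hi => Finset.disjoint_sup_right.2 fun j hj =>
      he (ne_of_mem_of_not_mem hi (mem_compl.1 hj))
  · rw [codisjoint_iff, ← sup_union, union_compl, htop]

lemma Finset.sup_mem_of_pairwise_disjoint {S : Set B} (hS : IsOrthoSubalgebra S)
    (he : Pairwise (Disjoint on e)) (heS : ∀ i, e i ∈ S) (s : Finset ι) : s.sup e ∈ S := by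
  induction s using Finset.induction_on with
  | empty => exact hS.bot_mem
  | insert i s hi ih =>
    rw [sup_insert]
    exact hS.sup_mem _ (heS i) _ ih
      (Finset.disjoint_sup_right.2 fun j hj => he (ne_of_mem_of_not_mem hj hi).symm)

def BooleanSubalgebra.ofPartition [Fintype ι] (he : Pairwise (Disjoint on e))
    (htop : univ.sup e = ⊤) : BooleanSubalgebra B where
  carrier := Set.range fun s : Finset ι => s.sup e
  supClosed' := by
    rintro _ ⟨s, rfl⟩ _ ⟨t, rfl⟩
    exact ⟨s ∪ t, sup_union⟩
  infClosed' := by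
    rintro _ ⟨s, rfl⟩ _ ⟨t, rfl⟩
    refine ⟨(sᶜ ∪ tᶜ)ᶜ, ?_⟩
    simp only [← Finset.compl_sup_of_pairwise_disjoint he htop, sup_union, compl_sup, compl_compl]
  compl_mem' := by
    rintro _ ⟨s, rfl⟩
    exact ⟨sᶜ, (Finset.compl_sup_of_pairwise_disjoint he htop s).symm⟩
  bot_mem' := ⟨∅, sup_empty⟩

lemma BooleanSubalgebra.mem_ofPartition [Fintype ι] {he : Pairwise (Disjoint on e)}
    {htop : univ.sup e = ⊤} {x : B} :
    x ∈ BooleanSubalgebra.ofPartition he htop ↔ ∃ s : Finset ι, s.sup e = x := Iff.rfl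

end Partition

lemma pairwise_disjoint_partition_three {p r : B} (hrp : r ≤ p) :
    Pairwise (Disjoint on ![r, p \ r, pᶜ]) := by
  have h01 : Disjoint r (p \ r) := disjoint_sdiff_self_right
  have h02 : Disjoint r pᶜ := disjoint_compl_right.mono_left hrp
  have h12 : Disjoint (p \ r) pᶜ := disjoint_compl_right.mono_left sdiff_le
  intro i j hij
  fin_cases i <;> fin_cases j <;> simp_all [onFun, Disjoint.symm]

lemma sup_partition_three_eq_top {p r : B} (hrp : r ≤ p) : univ.sup ![r, p \ r, pᶜ] = ⊤ := by
  simp [Fin.univ_succ, ← sup_assoc, sup_sdiff_cancel_right hrp]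

/-- `B` covers the subalgebra `{⊥, p, pᶜ, ⊤}` in the lattice of Boolean subalgebras of `B`. -/
def TopCovers (p : B) : Prop :=
  ∀ L : BooleanSubalgebra B, p ∈ L → (L : Set B) ⊆ {⊥, p, pᶜ, ⊤} ∨ L = ⊤

lemma TopCovers.compl {p : B} (hcov : TopCovers p) : TopCovers pᶜ := by
  intro L hL
  rw [compl_compl, Set.insert_comm pᶜ p]
  exact hcov L (BooleanSubalgebra.compl_mem_iff.1 hL)

lemma TopCovers.exists_sup_eq {p r : B} (hcov : TopCovers p) (hr0 : r ≠ ⊥) (hrp : r < p)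
    (hp1 : p ≠ ⊤) (x : B) : ∃ s : Finset (Fin 3), s.sup ![r, p \ r, pᶜ] = x := by
  set L := BooleanSubalgebra.ofPartition (pairwise_disjoint_partition_three hrp.le)
    (sup_partition_three_eq_top hrp.le)
  have hpL : p ∈ L := ⟨{0, 1}, by simp [sup_sdiff_cancel_right hrp.le]⟩
  have hrL : r ∈ L := ⟨{0}, by simp⟩
  rcases hcov L hpL with hsub | htop
  · exfalso
    rcases hsub hrL with h | h | h | h
    · exact hr0 h
    · exact hrp.ne h
    · exact hr0 ((disjoint_compl_right.mono_left hrp.le).eq_bot_of_le h.le)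
    · exact hp1 (top_le_iff.1 (h ▸ hrp.le))
  · exact BooleanSubalgebra.mem_ofPartition.1 (htop ▸ BooleanSubalgebra.mem_top)

lemma TopCovers.card_eq_eight_and_eq_univ_of_inf {p q : B} (hcov : TopCovers p) (hp1 : p ≠ ⊤)
    (hpq : p ⊓ q ≠ ⊥) (hpq' : ¬ p ≤ q) :
    Nat.card B = 8 ∧ ∀ S : Set B, IsOrthoSubalgebra S → p ∈ S → q ∈ S → S = Set.univ := by
  have hsurj := hcov.exists_sup_eq hpq (inf_lt_left.2 hpq') hp1
  simp only [sdiff_inf_self_left] at hsurj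
  have he := pairwise_disjoint_partition_three (p := p) (inf_le_left (b := q))
  rw [sdiff_inf_self_left] at he
  have hne : ∀ i, ![p ⊓ q, p \ q, pᶜ] i ≠ ⊥ := by
    intro i
    fin_cases i
    exacts [hpq, sdiff_eq_bot_iff.not.2 hpq', compl_eq_bot.not.2 hp1]
  have hbij : Bijective fun s : Finset (Fin 3) => s.sup ![p ⊓ q, p \ q, pᶜ] :=
    ⟨Finset.sup_injective_of_pairwise_disjoint he hne, hsurj⟩
  refine ⟨by simp [← Nat.card_eq_of_bijective _ hbij], fun S hS hp hq => ?_⟩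
  -- `pᶜ` is an atom of `B`
  have hcompl_inf : pᶜ ⊓ q = ⊥ ∨ pᶜ ≤ q := by
    obtain ⟨s, hs⟩ := hsurj q
    have h := Finset.sup_inf_of_pairwise_disjoint he s 2
    simp only [hs, Matrix.cons_val] at h
    split_ifs at h
    · exact Or.inr (inf_eq_right.1 h)
    · exact Or.inl (inf_comm q pᶜ ▸ h)
  have hparts : p ⊓ q ∈ S ∧ p \ q ∈ S := by
    rcases hcompl_inf with h | h
    · have hqp : q ≤ p := disjoint_compl_left_iff.1 (disjoint_iff.2 h)
      rw [inf_eq_right.2 hqp]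
      exact ⟨hq, hS.sdiff_mem hp hq hqp⟩
    · have hqp : qᶜ ≤ p := compl_le_of_compl_le h
      have hsdiff : p \ q = qᶜ := by rw [sdiff_eq, inf_eq_right.2 hqp]
      rw [hsdiff, ← sdiff_compl]
      exact ⟨hS.sdiff_mem hp (hS.compl_mem _ hq) hqp, hS.compl_mem _ hq⟩
  refine Set.eq_univ_of_forall fun x => ?_
  obtain ⟨s, rfl⟩ := hsurj x
  refine Finset.sup_mem_of_pairwise_disjoint hS he (fun i => ?_) s
  fin_cases i
  exacts [hparts.1, hparts.2, hS.compl_mem _ hp]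

lemma inf_ne_bot_and_not_le_or_of_notMem {p q : B} (hq : q ∉ ({⊥, p, pᶜ, ⊤} : Set B)) :
    (p ⊓ q ≠ ⊥ ∧ ¬ p ≤ q) ∨ (pᶜ ⊓ q ≠ ⊥ ∧ ¬ pᶜ ≤ q) := by
  have inf_eq_bot_or_self {c : B} (h : c ⊓ q ≠ ⊥ → c ≤ q) : c ⊓ q = ⊥ ∨ c ⊓ q = c :=
    or_iff_not_imp_left.2 fun h0 => inf_eq_left.2 (h h0)
  by_contra! h
  have hq_eq : q = p ⊓ q ⊔ pᶜ ⊓ q := by rw [← inf_sup_right, sup_compl_eq_top, top_inf_eq]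
  rcases inf_eq_bot_or_self h.1 with h1 | h1 <;> rcases inf_eq_bot_or_self h.2 with h2 | h2 <;>
    rw [h1, h2] at hq_eq <;> simp [hq_eq] at hq

theorem TopCovers.card_eq_eight_and_eq_univ {p q : B} (hcov : TopCovers p) (hp0 : p ≠ ⊥)
    (hp1 : p ≠ ⊤) (hq : q ∉ ({⊥, p, pᶜ, ⊤} : Set B)) :
    Nat.card B = 8 ∧ ∀ S : Set B, IsOrthoSubalgebra S → p ∈ S → q ∈ S → S = Set.univ := by
  rcases inf_ne_bot_and_not_le_or_of_notMem hq with ⟨hpq, hpq'⟩ | ⟨hpq, hpq'⟩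
  · exact hcov.card_eq_eight_and_eq_univ_of_inf hp1 hpq hpq'
  · obtain ⟨hcard, huniv⟩ :=
      hcov.compl.card_eq_eight_and_eq_univ_of_inf (compl_eq_top.not.2 hp0) hpq hpq'
    exact ⟨hcard, fun S hS hp hq => huniv S hS (hS.compl_mem _ hp) hq⟩

end BooleanAlgebra

section Embedding

variable {B : Type u} [BooleanAlgebra B]

structure IsBooleanEmbedding (g : B → A) : Prop where
  injective : Function.Injective g
  map_top : g ⊤ = one
  map_compl : ∀ β, g βᶜ = ocompl (g β)
  perp_iff : ∀ β γ, Perp (g β) (g γ) ↔ Disjoint β γ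
  map_sup : ∀ β γ, Disjoint β γ → g (β ⊔ γ) = oplus (g β) (g γ)

lemma IsBooleanSubalg.exists_isBooleanEmbedding {W : Set A} (hW : IsBooleanSubalg W) :
    ∃ (B : Type u) (_ : BooleanAlgebra B) (g : B → A), IsBooleanEmbedding g ∧ Set.range g = W := by
  obtain ⟨hWsub, B, _, f, hbij, -, h1, hc, hperp, hoplus⟩ := hW
  set e := Equiv.ofBijective f hbij
  have hfe (β : B) : f (e.symm β) = β := Equiv.ofBijective_apply_symm_apply f hbij β
  have he_eq {β : B} {w : A} (hw : w ∈ W) (h : f ⟨w, hw⟩ = β) : (e.symm β : A) = w :=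
    congrArg Subtype.val (e.symm_apply_eq.2 h.symm)
  refine ⟨B, inferInstance, fun β => e.symm β, ⟨Subtype.val_injective.comp e.symm.injective,
    ?_, fun β => ?_, fun β γ => ?_, fun β γ hβγ => ?_⟩, ?_⟩
  · exact he_eq hWsub.2.1 (h1 _ rfl)
  · exact he_eq (hWsub.2.2.1 _ (e.symm β).2) (by rw [hc _ _ rfl, hfe])
  · rw [hperp, hfe, hfe, disjoint_iff]
  · have hperp' : Perp (e.symm β : A) (e.symm γ) :=
      (hperp _ _).2 (by rwa [hfe, hfe, ← disjoint_iff])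
    exact he_eq (hWsub.2.2.2 _ (e.symm β).2 _ (e.symm γ).2 hperp')
      (by rw [hoplus _ _ _ hperp' rfl, hfe, hfe])
  · rw [← Function.comp_def, e.symm.surjective.range_comp, Subtype.range_coe]

namespace IsBooleanEmbedding

variable {g : B → A} (hg : IsBooleanEmbedding g)
include hg

lemma map_bot : g ⊥ = zero := by
  rw [← compl_top, hg.map_compl, hg.map_top, zero_def]

lemma image_bot_self_compl_top (p : B) :
    g '' {⊥, p, pᶜ, ⊤} = {zero, g p, ocompl (g p), one} := by
  simp only [Set.image_insert_eq, Set.image_singleton, hg.map_bot, hg.map_compl, hg.map_top]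

lemma isOASubalg_image (L : BooleanSubalgebra B) : IsOASubalg (g '' L) := by
  refine ⟨⟨⊥, L.bot_mem, hg.map_bot⟩, ⟨⊤, L.top_mem, hg.map_top⟩, ?_, ?_⟩
  · rintro _ ⟨β, hβ, rfl⟩
    exact ⟨βᶜ, L.compl_mem hβ, hg.map_compl β⟩
  · rintro _ ⟨β, hβ, rfl⟩ _ ⟨γ, hγ, rfl⟩ hperp
    exact ⟨β ⊔ γ, L.sup_mem hβ hγ, hg.map_sup β γ ((hg.perp_iff β γ).1 hperp)⟩

lemma isBooleanSubalg_image (L : BooleanSubalgebra B) : IsBooleanSubalg (g '' L) := by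
  set F := (Equiv.Set.image g L hg.injective).symm
  have hF (z : g '' L) : g (F z) = z :=
    congrArg Subtype.val ((Equiv.Set.image g L hg.injective).apply_symm_apply z)
  have hF_eq {z : g '' L} {β : L} : F z = β ↔ (z : A) = g β := by
    rw [← hF z, hg.injective.eq_iff, Subtype.coe_inj]
  refine ⟨hg.isOASubalg_image L, L, inferInstance, F, F.bijective,
    fun z hz => hF_eq.2 (hz.trans hg.map_bot.symm), fun z hz => hF_eq.2 (hz.trans hg.map_top.symm),
    fun a c hc => hF_eq.2 ?_, fun a b => ?_, fun a b c hab hc => hF_eq.2 ?_⟩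
  · rw [hc, ← hF a]
    exact (hg.map_compl _).symm
  · rw [← hF a, ← hF b, hg.perp_iff, disjoint_iff, ← Subtype.coe_inj]
    rfl
  · rw [← hF a, ← hF b] at hab
    rw [hc, ← hF a, ← hF b, BooleanSubalgebra.val_sup, hg.map_sup _ _ ((hg.perp_iff _ _).1 hab)]

lemma isOrthoSubalgebra_preimage {U : Set A} (hU : IsOASubalg U) :
    IsOrthoSubalgebra (g ⁻¹' U) where
  bot_mem := by rw [Set.mem_preimage, hg.map_bot]; exact hU.1
  compl_mem β hβ := by rw [Set.mem_preimage, hg.map_compl]; exact hU.2.2.1 _ hβ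
  sup_mem β hβ γ hγ hβγ := by
    rw [Set.mem_preimage, hg.map_sup β γ hβγ]
    exact hU.2.2.2 _ hβ _ hγ ((hg.perp_iff β γ).2 hβγ)

lemma topCovers {p : B}
    (hcov : ∀ U : Set A, IsBooleanSubalg U → {zero, g p, ocompl (g p), one} ⊆ U →
      U ⊆ Set.range g → U = {zero, g p, ocompl (g p), one} ∨ U = Set.range g) :
    TopCovers p := by
  intro L hp
  have hsub : ({⊥, p, pᶜ, ⊤} : Set B) ⊆ L := by
    simp [Set.insert_subset_iff, hp, L.compl_mem hp]
  rw [← hg.image_bot_self_compl_top, ← Set.image_univ] at hcov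
  rcases hcov _ (hg.isBooleanSubalg_image L) (Set.image_mono hsub)
    (Set.image_mono (Set.subset_univ _)) with h | h
  · exact Or.inl (hg.injective.image_injective h).le
  · exact Or.inr (BooleanSubalgebra.coe_eq_univ.1 (hg.injective.image_injective h))

end IsBooleanEmbedding

end Embedding

theorem stmt11_general (a b : A) (ha0 : a ≠ zero) (ha1 : a ≠ one)
    (hb0 : b ≠ zero) (hb1 : b ≠ one)
    (hxy : ({zero, a, ocompl a, one} : Set A) ≠ {zero, b, ocompl b, one})
    (W : Set A) (hW : IsBooleanSubalg W)
    -- `W` covers `x` in `BSub(A)`: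
    (hxW : ({zero, a, ocompl a, one} : Set A) ⊆ W)
    (hxcov : ∀ U : Set A, IsBooleanSubalg U →
      ({zero, a, ocompl a, one} : Set A) ⊆ U → U ⊆ W →
      U = ({zero, a, ocompl a, one} : Set A) ∨ U = W)
    (hyW : ({zero, b, ocompl b, one} : Set A) ⊆ W) :
    Nat.card W = 8 ∧
    ∀ U : Set A, IsBooleanSubalg U →
      ({zero, a, ocompl a, one} : Set A) ⊆ U →
      ({zero, b, ocompl b, one} : Set A) ⊆ U → W ⊆ U := by
  obtain ⟨B, _, g, hg, rfl⟩ := hW.exists_isBooleanEmbedding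
  obtain ⟨p, rfl⟩ : a ∈ Set.range g := hxW (by simp)
  obtain ⟨q, rfl⟩ : b ∈ Set.range g := hyW (by simp)
  have hq : q ∉ ({⊥, p, pᶜ, ⊤} : Set B) := by
    rintro (rfl | rfl | rfl | rfl)
    · exact hb0 hg.map_bot
    · exact hxy rfl
    · refine hxy ?_
      rw [← hg.image_bot_self_compl_top, ← hg.image_bot_self_compl_top, compl_compl,
        Set.insert_comm p]
    · exact hb1 hg.map_top
  obtain ⟨hcard, huniv⟩ := (hg.topCovers hxcov).card_eq_eight_and_eq_univ
    (fun h => ha0 (h ▸ hg.map_bot)) (fun h => ha1 (h ▸ hg.map_top)) hq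
  refine ⟨by rw [Nat.card_range_of_injective hg.injective, hcard], fun U hU hxU hyU => ?_⟩
  have hU := huniv _ (hg.isOrthoSubalgebra_preimage hU.1) (hxU (by simp)) (hyU (by simp))
  rintro _ ⟨β, rfl⟩
  exact Set.eq_univ_iff_forall.1 hU β

/-- Let `x = {0,a,a',1}` and `y = {0,b,b',1}` be distinct atoms of `BSub(A)`
both covered by an element `W` of `BSub(A)`.  Then `W` is an 8-element Boolean
subalgebra and `W` is the least upper bound of `x` and `y` in `BSub(A)`. -/
theorem stmt11 (a b : A) (ha0 : a ≠ zero) (ha1 : a ≠ one)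
    (hb0 : b ≠ zero) (hb1 : b ≠ one)
    (hxy : ({zero, a, ocompl a, one} : Set A) ≠ {zero, b, ocompl b, one})
    (hx : IsBooleanSubalg ({zero, a, ocompl a, one} : Set A))
    (hy : IsBooleanSubalg ({zero, b, ocompl b, one} : Set A))
    (W : Set A) (hW : IsBooleanSubalg W)
    -- `W` covers `x` in `BSub(A)`:
    (hxW : ({zero, a, ocompl a, one} : Set A) ⊆ W)
    (hxWne : ({zero, a, ocompl a, one} : Set A) ≠ W)
    (hxcov : ∀ U : Set A, IsBooleanSubalg U →
      ({zero, a, ocompl a, one} : Set A) ⊆ U → U ⊆ W →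
      U = ({zero, a, ocompl a, one} : Set A) ∨ U = W)
    -- `W` covers `y` in `BSub(A)`:
    (hyW : ({zero, b, ocompl b, one} : Set A) ⊆ W)
    (hyWne : ({zero, b, ocompl b, one} : Set A) ≠ W)
    (hycov : ∀ U : Set A, IsBooleanSubalg U →
      ({zero, b, ocompl b, one} : Set A) ⊆ U → U ⊆ W →
      U = ({zero, b, ocompl b, one} : Set A) ∨ U = W) :
    Nat.card W = 8 ∧
    ∀ U : Set A, IsBooleanSubalg U →
      ({zero, a, ocompl a, one} : Set A) ⊆ U →
      ({zero, b, ocompl b, one} : Set A) ⊆ U → W ⊆ U :=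
  stmt11_general a b ha0 ha1 hb0 hb1 hxy W hW hxW hxcov hyW
end

section
/- For an orthodomain X with no basic maximal elements, the following are equivalent: (1) each basic element has a direction; (2) each basic element has exactly two directions. -/
section OrthodomainDefs

/-- Order-theoretic compactness: `k` is compact if whenever `k ≤ ⋁D` for a
nonempty directed set `D` having a least upper bound, then `k ≤ d` for some
`d ∈ D`. -/
def CompactIn {P : Type*} [PartialOrder P] (k : P) : Prop :=
  ∀ D : Set P, D.Nonempty → DirectedOn (· ≤ ·) D →
    ∀ l, IsLUB D l → k ≤ l → ∃ d ∈ D, k ≤ d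

/-- A poset is a finite partition lattice if it is order-isomorphic to the
lattice of partitions (equivalence relations) of a finite set. -/
def IsPartitionLat (P : Type*) [PartialOrder P] : Prop :=
  ∃ (α : Type) (_ : Finite α), Nonempty (P ≃o Setoid α)

/-- A Boolean domain: an algebraic (complete, compactly generated) lattice in
which the principal downset of each compact element is a finite partition
lattice. -/
def IsBooleanDomain (P : Type*) [PartialOrder P] : Prop :=
  (∀ S : Set P, ∃ l, IsLUB S l) ∧
  (∀ x : P, IsLUB {k : P | CompactIn k ∧ k ≤ x} x) ∧
  (∀ k : P, CompactIn k → IsPartitionLat {y : P // y ≤ k})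

variable (X : Type*) [PartialOrder X] [OrderBot X]

/-- An orthodomain: a poset with least element in which (1) directed subsets
have joins; (2) the poset is atomistic and atoms are compact; (3) every
principal ideal is a Boolean domain; (4) distinct atoms covered by a common
element join to that element. -/
structure IsOrthodomain : Prop where
  directed_joins : ∀ D : Set X, D.Nonempty → DirectedOn (· ≤ ·) D → ∃ l, IsLUB D l
  atomistic : ∀ x : X, IsLUB {a : X | IsAtom a ∧ a ≤ x} x
  atoms_compact : ∀ a : X, IsAtom a → CompactIn a
  downset_boolean : ∀ x : X, IsBooleanDomain {y : X // y ≤ x}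
  atom_cover : ∀ x y w : X, IsAtom x → IsAtom y → x ≠ y →
    x ⋖ w → y ⋖ w → IsLUB {x, y} w

end OrthodomainDefs

section Directions

variable {X : Type*} [PartialOrder X] [OrderBot X]

/-- `j` is the join of `a` and `b` inside the principal ideal `↓t`. -/
def IsJoinIn (t a b j : X) : Prop :=
  a ≤ j ∧ b ≤ j ∧ j ≤ t ∧ ∀ c : X, c ≤ t → a ≤ c → b ≤ c → j ≤ c

/-- `x` is a dual modular element of the Boolean domain `↓t`:
`(x ∨ y) ∧ z = x ∨ (y ∧ z)` whenever `x ≤ z`, and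
`(w ∨ x) ∧ y = w ∨ (x ∧ y)` whenever `w ≤ y` (all elements and lattice
operations taken inside `↓t`; meets in `↓t` agree with greatest lower bounds
in `X`). -/
def DualModularIn (t x : X) : Prop :=
  x ≤ t ∧
  (∀ y z j m m' : X, y ≤ t → z ≤ t → x ≤ z → IsJoinIn t x y j →
    IsGLB {j, z} m → IsGLB {y, z} m' → IsJoinIn t x m' m) ∧
  (∀ w y j m m' : X, w ≤ t → y ≤ t → w ≤ y → IsJoinIn t w x j →
    IsGLB {j, y} m → IsGLB {x, y} m' → IsJoinIn t w m' m)

/-- A basic element: the least element or an atom. -/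
def BasicIn (x : X) : Prop := x = ⊥ ∨ IsAtom x

/-- `(y, z)` is a principal pair for the basic element `x` in the Boolean
domain `↓t`: `y` and `z` are dual modular in `↓t`, `y ∧ z = x`, and either
`y = ⊤` and `z` is basic, or `z = ⊤` and `y` is basic, or `y ∨ z = ⊤` and
`y ∧ z = x` is basic but not dual modular. -/
def PrincipalPairFor (t x y z : X) : Prop :=
  DualModularIn t y ∧ DualModularIn t z ∧ IsGLB {y, z} x ∧
  ((y = t ∧ BasicIn z) ∨ (z = t ∧ BasicIn y) ∨
    (IsJoinIn t y z t ∧ BasicIn x ∧ ¬ DualModularIn t x))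

/-- A direction for a basic element `x` of an orthodomain `X`: a map
`d : ↑x → X²` such that (1) `d y` is a principal pair for `x` in the Boolean
domain `↓y`; (2) if `y ≤ z` and `d z = (v, w)` then `d y = (y ∧ v, y ∧ w)`;
(3) if `x ⋖ y, z` with `d y = (x, y)` and `d z = (z, x)`, then `y ∨ z` exists
and covers both `y` and `z`. -/
def IsDirectionFor (x : X) (d : {y : X // x ≤ y} → X × X) : Prop :=
  BasicIn x ∧
  (∀ y : {y : X // x ≤ y}, PrincipalPairFor y.1 x (d y).1 (d y).2) ∧
  (∀ y z : {y : X // x ≤ y}, y.1 ≤ z.1 →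
    IsGLB {y.1, (d z).1} (d y).1 ∧ IsGLB {y.1, (d z).2} (d y).2) ∧
  (∀ y z : {y : X // x ≤ y}, x ⋖ y.1 → x ⋖ z.1 →
    d y = (x, y.1) → d z = (z.1, x) →
    ∃ j : X, IsLUB {y.1, z.1} j ∧ y.1 ⋖ j ∧ z.1 ⋖ j)

end Directions


/-!
A direction `d` for `x` is determined by its values on the covers of `x`. If two directions
agree at one cover `p` of `x`, they agree at every cover `q`: otherwise one of them takes the
values `(x, p)` and `(q, x)`, so by the covering condition `j = p ∨ q` exists, and the two
directions restricted to `↓j` give principal pairs showing that `x` both is and is not dual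
modular in `↓j`. Agreement on covers propagates upwards, by induction, through every finite
interval `[x, s]`, in particular through `[x, x ∨ a]` for each atom `a`; since an element is
the join of the atoms below it, this pins down the components of `d` everywhere.
At a cover `p` the value `d p` is `(x, p)` or `(p, x)`, so every direction is `d` or its
orthocomplement `d'`, and `d ≠ d'` because `x` is not maximal.
-/

section Compactness

variable {P : Type*} [PartialOrder P]

lemma isGLB_pair_of_le {a b : P} (h : a ≤ b) : IsGLB {a, b} a :=
  IsLeast.isGLB ⟨Set.mem_insert _ _, by rintro _ (rfl | rfl); exacts [le_rfl, h]⟩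

lemma compactIn_bot [OrderBot P] : CompactIn (⊥ : P) :=
  fun _ ⟨z, hz⟩ _ _ _ _ => ⟨z, hz, bot_le⟩

lemma CompactIn.of_isLUB_pair {a b s : P} (ha : CompactIn a) (hb : CompactIn b)
    (hs : IsLUB {a, b} s) : CompactIn s := by
  intro D hne hdir l hl hsl
  obtain ⟨d₁, hd₁, had₁⟩ := ha D hne hdir l hl ((hs.1 (Set.mem_insert _ _)).trans hsl)
  obtain ⟨d₂, hd₂, hbd₂⟩ :=
    hb D hne hdir l hl ((hs.1 (Set.mem_insert_of_mem _ rfl)).trans hsl)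
  obtain ⟨d, hd, h₁, h₂⟩ := hdir d₁ hd₁ d₂ hd₂
  exact ⟨d, hd, hs.2 (by rintro _ (rfl | rfl) <;> order)⟩

lemma IsPartitionLat.finite (h : IsPartitionLat P) : Finite P := by
  obtain ⟨α, _, ⟨e⟩⟩ := h
  have : Finite (Setoid α) :=
    Finite.of_injective (fun s : Setoid α => ⇑s) fun _ _ hr =>
      Setoid.ext fun a b => Iff.of_eq (congrFun (congrFun hr a) b)
  exact Finite.of_equiv _ e.toEquiv.symm

end Compactness

section

variable {X : Type*} [PartialOrder X]

lemma CompactIn.subtype_le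
    (hX : ∀ D : Set X, D.Nonempty → DirectedOn (· ≤ ·) D → ∃ l, IsLUB D l)
    {t a : X} (ha : CompactIn a) (hat : a ≤ t) :
    CompactIn (⟨a, hat⟩ : {y : X // y ≤ t}) := by
  intro D hne hdir l hl hal
  have hne' : (Subtype.val '' D).Nonempty := hne.image _
  have hdir' : DirectedOn (· ≤ ·) (Subtype.val '' D) := by
    rintro _ ⟨w₁, hw₁, rfl⟩ _ ⟨w₂, hw₂, rfl⟩
    obtain ⟨w, hw, h₁, h₂⟩ := hdir w₁ hw₁ w₂ hw₂
    exact ⟨w, ⟨w, hw, rfl⟩, h₁, h₂⟩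
  obtain ⟨l₀, hl₀⟩ := hX _ hne' hdir'
  have hl₀t : l₀ ≤ t := hl₀.2 (by rintro _ ⟨w, -, rfl⟩; exact w.2)
  have hll₀ : l ≤ ⟨l₀, hl₀t⟩ := hl.2 fun w hw => hl₀.1 ⟨w, hw, rfl⟩
  obtain ⟨_, ⟨w, hw, rfl⟩, haw⟩ := ha _ hne' hdir' l₀ hl₀ (hal.trans hll₀)
  exact ⟨w, hw, haw⟩

lemma IsJoinIn.symm {t a b j : X} (h : IsJoinIn t a b j) : IsJoinIn t b a j :=
  ⟨h.2.1, h.1, h.2.2.1, fun c hc hb ha => h.2.2.2 c hc ha hb⟩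

variable [OrderBot X]

namespace IsOrthodomain

lemma compactIn_of_basicIn (h : IsOrthodomain X) {x : X} (hx : BasicIn x) : CompactIn x := by
  rcases hx with rfl | hx
  · exact compactIn_bot
  · exact h.atoms_compact x hx

/-- The join is taken in the complete lattice `↓t`; as a join of compact elements it is compact,
so the partition lattice below it is finite. -/
lemma exists_isJoinIn_finite_Icc (h : IsOrthodomain X) {x t a : X} (hx : BasicIn x) (hxt : x ≤ t)
    (ha : IsAtom a) (hat : a ≤ t) : ∃ s, IsJoinIn t x a s ∧ (Set.Icc x s).Finite := by
  obtain ⟨hlub, -, hpart⟩ := h.downset_boolean t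
  obtain ⟨s, hs⟩ := hlub {⟨x, hxt⟩, ⟨a, hat⟩}
  have hcompact : CompactIn s :=
    ((h.compactIn_of_basicIn hx).subtype_le h.directed_joins hxt).of_isLUB_pair
      ((h.atoms_compact a ha).subtype_le h.directed_joins hat) hs
  have := (hpart s hcompact).finite
  have : Finite (Set.Iic s.1) :=
    Finite.of_injective
      (fun u => (⟨⟨u.1, u.2.trans s.2⟩, u.2⟩ : {y : {y : X // y ≤ t} // y ≤ s}))
      fun u v huv => Subtype.ext (congrArg (fun w => w.1.1) huv)
  refine ⟨s.1, ⟨hs.1 (Set.mem_insert _ _), hs.1 (Set.mem_insert_of_mem _ rfl), s.2, ?_⟩,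
    (Set.toFinite _).subset Set.Icc_subset_Iic_self⟩
  intro c hct hxc hac
  exact (show s ≤ ⟨c, hct⟩ from hs.2 (by rintro _ (rfl | rfl) <;> assumption))

lemma exists_covBy (h : IsOrthodomain X) {x b : X} (hx : BasicIn x) (hxb : x < b) :
    ∃ p, x ⋖ p := by
  obtain ⟨a, ⟨ha, hab⟩, hax⟩ : ∃ a ∈ {a | IsAtom a ∧ a ≤ b}, ¬ a ≤ x := by
    by_contra! hle
    exact hxb.not_ge ((h.atomistic b).2 hle)
  obtain ⟨s, hs, hfin⟩ := h.exists_isJoinIn_finite_Icc hx hxb.le ha hab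
  have hxs : x < s := hs.1.lt_of_ne fun hxs => hax (hxs ▸ hs.2.1)
  obtain ⟨p, hp⟩ := (hfin.subset Set.Ioc_subset_Icc_self).exists_minimal ⟨s, hxs, le_rfl⟩
  exact ⟨p, hp.prop.1, fun c hxc hcp => hp.not_lt ⟨hxc, hcp.le.trans hp.prop.2⟩ hcp⟩

end IsOrthodomain

namespace PrincipalPairFor

variable {t x v w : X}

lemma swap (hp : PrincipalPairFor t x v w) : PrincipalPairFor t x w v := by
  obtain ⟨hv, hw, hglb, hcase⟩ := hp
  refine ⟨hw, hv, Set.pair_comm v w ▸ hglb, ?_⟩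
  rcases hcase with hcase | hcase | ⟨hj, hcase⟩
  · exact Or.inr (Or.inl hcase)
  · exact Or.inl hcase
  · exact Or.inr (Or.inr ⟨hj.symm, hcase⟩)

lemma fst_le (hp : PrincipalPairFor t x v w) : v ≤ t := hp.1.1

lemma snd_le (hp : PrincipalPairFor t x v w) : w ≤ t := hp.2.1.1

lemma le_fst (hp : PrincipalPairFor t x v w) : x ≤ v := hp.2.2.1.1 (Set.mem_insert _ _)

lemma le_snd (hp : PrincipalPairFor t x v w) : x ≤ w := hp.swap.le_fst

lemma fst_eq_top_iff (hp : PrincipalPairFor t x v w) : v = t ↔ w = x := by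
  constructor
  · rintro rfl
    exact (hp.2.2.1.unique (Set.pair_comm v w ▸ isGLB_pair_of_le hp.snd_le)).symm
  · rintro rfl
    rcases hp.2.2.2 with ⟨hvt, -⟩ | ⟨rfl, -⟩ | ⟨-, -, hnot⟩
    · exact hvt
    · exact le_antisymm hp.fst_le hp.le_fst
    · exact absurd hp.2.1 hnot

lemma not_dualModularIn (hp : PrincipalPairFor t x v w) (hv : v ≠ x) (hw : w ≠ x) :
    ¬ DualModularIn t x := by
  rcases hp.2.2.2 with ⟨hvt, -⟩ | ⟨hwt, -⟩ | ⟨-, -, hnot⟩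
  · exact absurd (hp.fst_eq_top_iff.1 hvt) hw
  · exact absurd (hp.swap.fst_eq_top_iff.1 hwt) hv
  · exact hnot

lemma eq_or_eq_of_covBy (hp : PrincipalPairFor t x v w) (hxt : x ⋖ t) :
    (v = x ∧ w = t) ∨ (v = t ∧ w = x) := by
  rcases hxt.eq_or_eq hp.le_fst hp.fst_le with hv | hv
  · exact Or.inl ⟨hv, hp.swap.fst_eq_top_iff.2 hv⟩
  · exact Or.inr ⟨hv, hp.fst_eq_top_iff.1 hv⟩

end PrincipalPairFor

namespace IsDirectionFor

variable {x : X} {d e : {y : X // x ≤ y} → X × X}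

lemma pair (hd : IsDirectionFor x d) (u : {y : X // x ≤ y}) :
    PrincipalPairFor u.1 x (d u).1 (d u).2 :=
  hd.2.1 u

lemma swap (hd : IsDirectionFor x d) : IsDirectionFor x (Prod.swap ∘ d) := by
  refine ⟨hd.1, fun u => (hd.pair u).swap, fun r u hru => (hd.2.2.1 r u hru).symm, ?_⟩
  intro p q hp hq hdp hdq
  obtain ⟨j, hj, hpj, hqj⟩ := hd.2.2.2 q p hq hp
    (Prod.swap_injective hdq) (Prod.swap_injective hdp)
  exact ⟨j, Set.pair_comm q.1 p.1 ▸ hj, hqj, hpj⟩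

lemma le_fst_iff (hd : IsDirectionFor x d) {r u : {y : X // x ≤ y}} (hru : r.1 ≤ u.1) :
    r.1 ≤ (d u).1 ↔ (d r).1 = r.1 := by
  have hglb := (hd.2.2.1 r u hru).1
  exact ⟨fun h => hglb.unique (isGLB_pair_of_le h),
    fun h => h ▸ hglb.1 (Set.mem_insert_of_mem _ rfl)⟩

lemma le_snd_iff (hd : IsDirectionFor x d) {r u : {y : X // x ≤ y}} (hru : r.1 ≤ u.1) :
    r.1 ≤ (d u).2 ↔ (d r).2 = r.1 :=
  hd.swap.le_fst_iff hru

lemma apply_of_eq (hd : IsDirectionFor x d) {u : {y : X // x ≤ y}} (hu : u.1 = x) :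
    d u = (x, x) :=
  Prod.ext (le_antisymm (hu ▸ (hd.pair u).fst_le) (hd.pair u).le_fst)
    (le_antisymm (hu ▸ (hd.pair u).snd_le) (hd.pair u).le_snd)

lemma apply_ne_swap (hd : IsDirectionFor x d) {u : {y : X // x ≤ y}} (hxu : x < u.1) :
    d u ≠ (d u).swap := by
  intro hdu
  have hvw : (d u).1 = (d u).2 := congrArg Prod.fst hdu
  have hglb := (hd.pair u).2.2.1
  rw [← hvw, Set.pair_eq_singleton] at hglb
  have hvx : (d u).1 = x := isGLB_singleton.unique hglb
  have hvu : (d u).1 = u.1 := (hd.pair u).fst_eq_top_iff.2 (hvw ▸ hvx)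
  exact hxu.ne (hvx.symm.trans hvu)

lemma apply_eq_or_of_covBy (hd : IsDirectionFor x d) {q : {y : X // x ≤ y}} (hq : x ⋖ q.1) :
    d q = (x, q.1) ∨ d q = (q.1, x) := by
  rcases (hd.pair q).eq_or_eq_of_covBy hq with ⟨hv, hw⟩ | ⟨hv, hw⟩
  · exact Or.inl (Prod.ext hv hw)
  · exact Or.inr (Prod.ext hv hw)

/-- The covering condition for `d` yields `j = p ∨ q`; there `d` shows that `x` is not dual
modular in `↓j`, while `e` would make `(x, j)` a principal pair. -/
lemma apply_ne_of_covBy (hd : IsDirectionFor x d) (he : IsDirectionFor x e)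
    {p q : {y : X // x ≤ y}} (hp : x ⋖ p.1) (hq : x ⋖ q.1)
    (hdp : d p = (x, p.1)) (hep : e p = (x, p.1)) (hdq : d q = (q.1, x)) :
    e q ≠ (x, q.1) := by
  intro heq
  obtain ⟨j, hj, hpj, hqj⟩ := hd.2.2.2 p q hp hq hdp hdq
  let J : {y : X // x ≤ y} := ⟨j, hp.le.trans hpj.le⟩
  have hqd : q.1 ≤ (d J).1 := (hd.le_fst_iff hqj.le).2 (by rw [hdq])
  have hpd : p.1 ≤ (d J).2 := (hd.le_snd_iff hpj.le).2 (by rw [hdp])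
  have hnot : ¬ DualModularIn j x := (hd.pair J).not_dualModularIn
    (fun h => hq.lt.not_ge (hqd.trans_eq h)) (fun h => hp.lt.not_ge (hpd.trans_eq h))
  have hpe : p.1 ≤ (e J).2 := (he.le_snd_iff hpj.le).2 (by rw [hep])
  have hqe : q.1 ≤ (e J).2 := (he.le_snd_iff hqj.le).2 (by rw [heq])
  have hej : (e J).2 = j :=
    le_antisymm (he.pair J).snd_le (hj.2 (by simp [upperBounds_insert, hpe, hqe]))
  have hex : (e J).1 = x := (he.pair J).swap.fst_eq_top_iff.1 hej
  exact hnot (hex ▸ (he.pair J).1)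

lemma eqOn_covBy_of_apply_eq_of_fst_eq (hd : IsDirectionFor x d) (he : IsDirectionFor x e)
    {p : {y : X // x ≤ y}} (hp : x ⋖ p.1) (hdp : (d p).1 = x) (hpe : d p = e p)
    {q : {y : X // x ≤ y}} (hq : x ⋖ q.1) : d q = e q := by
  have hdp : d p = (x, p.1) := Prod.ext hdp ((hd.pair p).swap.fst_eq_top_iff.2 hdp)
  have hep : e p = (x, p.1) := hpe ▸ hdp
  rcases hd.apply_eq_or_of_covBy hq with hdq | hdq <;>
    rcases he.apply_eq_or_of_covBy hq with heq | heq
  · rw [hdq, heq]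
  · exact absurd hdq (apply_ne_of_covBy he hd hp hq hep hdp heq)
  · exact absurd heq (apply_ne_of_covBy hd he hp hq hdp hep hdq)
  · rw [hdq, heq]

lemma eqOn_covBy_of_apply_eq (hd : IsDirectionFor x d) (he : IsDirectionFor x e)
    {p : {y : X // x ≤ y}} (hp : x ⋖ p.1) (hpe : d p = e p) :
    ∀ q : {y : X // x ≤ y}, x ⋖ q.1 → d q = e q := by
  intro q hq
  rcases (hd.pair p).eq_or_eq_of_covBy hp with ⟨hdp, -⟩ | ⟨-, hdp⟩
  · exact eqOn_covBy_of_apply_eq_of_fst_eq hd he hp hdp hpe hq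
  · exact Prod.swap_injective <|
      eqOn_covBy_of_apply_eq_of_fst_eq hd.swap he.swap hp hdp (congrArg Prod.swap hpe) hq

section Agreement

variable {u : {y : X // x ≤ y}}

lemma fst_le_fst_of_fst_lt (hd : IsDirectionFor x d) (he : IsDirectionFor x e)
    (hlt : ∀ r : {y : X // x ≤ y}, r.1 < u.1 → d r = e r) (hdu : (d u).1 < u.1) :
    (d u).1 ≤ (e u).1 := by
  let r : {y : X // x ≤ y} := ⟨(d u).1, (hd.pair u).le_fst⟩
  have hdr : (d r).1 = r.1 := (hd.le_fst_iff hdu.le).1 le_rfl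
  exact (he.le_fst_iff hdu.le).2 (hlt r hdu ▸ hdr)

lemma fst_eq_top_of_fst_eq_top (hd : IsDirectionFor x d) (he : IsDirectionFor x e)
    (hlt : ∀ r : {y : X // x ≤ y}, r.1 < u.1 → d r = e r)
    {r : {y : X // x ≤ y}} (hxr : x < r.1) (hru : r.1 < u.1) (hdu : (d u).1 = u.1) :
    (e u).1 = u.1 := by
  have hdx : (d u).2 = x := (hd.pair u).fst_eq_top_iff.1 hdu
  rw [(he.pair u).fst_eq_top_iff]
  rcases (he.pair u).snd_le.lt_or_eq with heu | heu
  · have := fst_le_fst_of_fst_lt he.swap hd.swap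
      (fun r hr => congrArg Prod.swap (hlt r hr).symm) heu
    exact le_antisymm (this.trans_eq hdx) (he.pair u).le_snd
  · have hex : (e u).1 = x := (he.pair u).swap.fst_eq_top_iff.1 heu
    have hdr : (d r).1 = r.1 := (hd.le_fst_iff hru.le).1 (hdu ▸ hru.le)
    have her : r.1 ≤ (e u).1 := (he.le_fst_iff hru.le).2 (hlt r hru ▸ hdr)
    exact absurd (her.trans_eq hex) hxr.not_ge

lemma fst_eq_fst_of_eqOn_lt (hd : IsDirectionFor x d) (he : IsDirectionFor x e)
    (hlt : ∀ r : {y : X // x ≤ y}, r.1 < u.1 → d r = e r)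
    {r : {y : X // x ≤ y}} (hxr : x < r.1) (hru : r.1 < u.1) : (d u).1 = (e u).1 := by
  have hlt' : ∀ r : {y : X // x ≤ y}, r.1 < u.1 → e r = d r := fun r hr => (hlt r hr).symm
  rcases (hd.pair u).fst_le.lt_or_eq with hdu | hdu
  · rcases (he.pair u).fst_le.lt_or_eq with heu | heu
    · exact le_antisymm (fst_le_fst_of_fst_lt hd he hlt hdu) (fst_le_fst_of_fst_lt he hd hlt' heu)
    · exact (fst_eq_top_of_fst_eq_top he hd hlt' hxr hru heu).trans heu.symm
  · exact hdu.trans (fst_eq_top_of_fst_eq_top hd he hlt hxr hru hdu).symm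

lemma eq_of_eqOn_lt (hd : IsDirectionFor x d) (he : IsDirectionFor x e)
    (hcov : ∀ q : {y : X // x ≤ y}, x ⋖ q.1 → d q = e q)
    (hlt : ∀ r : {y : X // x ≤ y}, r.1 < u.1 → d r = e r) : d u = e u := by
  rcases u.2.eq_or_lt with hxu | hxu
  · rw [hd.apply_of_eq hxu.symm, he.apply_of_eq hxu.symm]
  by_cases hu : x ⋖ u.1
  · exact hcov u hu
  obtain ⟨r, hxr, hru⟩ := (not_covBy_iff hxu).1 hu
  let r' : {y : X // x ≤ y} := ⟨r, hxr.le⟩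
  exact Prod.ext (fst_eq_fst_of_eqOn_lt hd he hlt (r := r') hxr hru)
    (fst_eq_fst_of_eqOn_lt hd.swap he.swap (fun r hr => congrArg Prod.swap (hlt r hr))
      (r := r') hxr hru)

lemma eq_of_finite_Icc (hd : IsDirectionFor x d) (he : IsDirectionFor x e)
    (hcov : ∀ q : {y : X // x ≤ y}, x ⋖ q.1 → d q = e q)
    (hfin : (Set.Icc x u.1).Finite) : d u = e u := by
  have := hfin.to_subtype
  suffices ∀ s : Set.Icc x u.1, d ⟨s.1, s.2.1⟩ = e ⟨s.1, s.2.1⟩ from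
    this ⟨u.1, u.2, le_rfl⟩
  intro s
  induction s using WellFoundedLT.induction with
  | _ s ih =>
    exact eq_of_eqOn_lt hd he hcov fun r hr => ih ⟨r.1, r.2, hr.le.trans s.2.2⟩ hr

end Agreement

lemma fst_le_fst_of_eqOn_covBy (h : IsOrthodomain X) (hd : IsDirectionFor x d)
    (he : IsDirectionFor x e)
    (hcov : ∀ q : {y : X // x ≤ y}, x ⋖ q.1 → d q = e q) (u : {y : X // x ≤ y}) :
    (d u).1 ≤ (e u).1 := by
  refine (h.atomistic (d u).1).2 ?_
  rintro a ⟨ha, hav⟩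
  obtain ⟨s, hs, hfin⟩ :=
    h.exists_isJoinIn_finite_Icc hd.1 u.2 ha (hav.trans (hd.pair u).fst_le)
  let s' : {y : X // x ≤ y} := ⟨s, hs.1⟩
  have hsv : s ≤ (d u).1 := hs.2.2.2 _ (hd.pair u).fst_le (hd.pair u).le_fst hav
  have hds : (d s').1 = s := (hd.le_fst_iff hs.2.2.1).1 hsv
  have hes : (e s').1 = s := eq_of_finite_Icc (u := s') hd he hcov hfin ▸ hds
  exact hs.2.1.trans ((he.le_fst_iff hs.2.2.1).2 hes)

lemma eq_of_eqOn_covBy (h : IsOrthodomain X) (hd : IsDirectionFor x d)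
    (he : IsDirectionFor x e)
    (hcov : ∀ q : {y : X // x ≤ y}, x ⋖ q.1 → d q = e q) : d = e := by
  have hcov' : ∀ q : {y : X // x ≤ y}, x ⋖ q.1 → e q = d q := fun q hq => (hcov q hq).symm
  funext u
  exact Prod.ext
    (le_antisymm (fst_le_fst_of_eqOn_covBy h hd he hcov u)
      (fst_le_fst_of_eqOn_covBy h he hd hcov' u))
    (le_antisymm
      (fst_le_fst_of_eqOn_covBy h hd.swap he.swap (fun q hq => congrArg Prod.swap (hcov q hq)) u)
      (fst_le_fst_of_eqOn_covBy h he.swap hd.swap (fun q hq => congrArg Prod.swap (hcov' q hq)) u))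

lemma eq_or_eq_swap (h : IsOrthodomain X) (hd : IsDirectionFor x d)
    (he : IsDirectionFor x e)
    {p : {y : X // x ≤ y}} (hp : x ⋖ p.1) : e = d ∨ e = Prod.swap ∘ d := by
  have hpe : e p = d p ∨ e p = (d p).swap := by
    rcases hd.apply_eq_or_of_covBy hp with hdp | hdp <;>
      rcases he.apply_eq_or_of_covBy hp with hep | hep <;> simp [hdp, hep]
  rcases hpe with hpe | hpe
  · exact Or.inl (eq_of_eqOn_covBy h he hd (eqOn_covBy_of_apply_eq he hd hp hpe))
  · exact Or.inr (eq_of_eqOn_covBy h he hd.swap (eqOn_covBy_of_apply_eq he hd.swap hp hpe))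

end IsDirectionFor

end

/-- For an orthodomain `X` with no basic maximal elements, the following are
equivalent: (1) each basic element has a direction; (2) each basic element has
exactly two directions. -/
theorem stmt16 {X : Type*} [PartialOrder X] [OrderBot X]
    (h : IsOrthodomain X) (hp : ∀ x : X, BasicIn x → ¬ IsMax x) :
    (∀ x : X, BasicIn x → ∃ d, IsDirectionFor x d) ↔
    (∀ x : X, BasicIn x → ∃ d₁ d₂ : {y : X // x ≤ y} → X × X,
      d₁ ≠ d₂ ∧ IsDirectionFor x d₁ ∧ IsDirectionFor x d₂ ∧
      ∀ d, IsDirectionFor x d → d = d₁ ∨ d = d₂) := by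
  refine ⟨fun H x hx => ?_, fun H x hx => ?_⟩
  · obtain ⟨d, hd⟩ := H x hx
    obtain ⟨b, hxb⟩ := not_isMax_iff.1 (hp x hx)
    obtain ⟨p, hxp⟩ := h.exists_covBy hx hxb
    refine ⟨d, Prod.swap ∘ d, fun hdd => ?_, hd, hd.swap, fun e he => ?_⟩
    · exact hd.apply_ne_swap (u := ⟨b, hxb.le⟩) hxb (congrFun hdd _)
    · exact hd.eq_or_eq_swap h he (p := ⟨p, hxp.le⟩) hxp
  · obtain ⟨d, -, -, hd, -⟩ := H x hx
    exact ⟨d, hd⟩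
end
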